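/- arXiv:1709.03570 — 5 statements merged into one kernel-verified Lean document; each statement's English description precedes it below -/
import Mathlib

section
/- With probability at least 1 − δ, the empirical mean never falls below μ by more than z_t at any time: P( ∃ t ∈ ℕ : μ̂_t − μ < −z_t ) ≤ δ. -/
/-!
For `s ≥ 0` the process `exp (s * (t * μ - S t))`, `S t = ∑ j < t, Y j`, is a nonnegative
submartingale: each new factor is independent of the past and has mean `≥ 1` as `eᵘ ≥ 1 + u`.
Doob's maximal inequality, the bound `E[exp (-s Y)] ≤ 1 - μ + μ e^{-s}` for `[0,1]`-valued `Y`
and the optimal choice of `s` give `P(∃ t ≤ M, S t ≤ t μ - M (μ - x)) ≤ exp (-M kl(x, μ))`.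

Times `t < N` are treated one at a time; larger times are grouped into the blocks
`[i 2^k, (i + 1) 2^k)` with `N ≤ i < 2N`, within which `t` varies by a factor less than
`(N + 1) / N` and `log₂ (2t) ≥ k + l + 1`. On a block, the time minimising `t z_t` gives a common
level; since `kl(·, μ)` is convex and vanishes at `μ`, the boundary equation at the factor
`N / (N + 1)` bounds the probability of the block by `(δ / κ)^p (k + l + 1)^(-p)`,
`p = (N + 1) / N`. Summing over all blocks, the normalisation of `κ` makes the total exactly `δ`.
-/

open MeasureTheory ProbabilityTheory Set

/-- KL divergence between Bernoulli(p) and Bernoulli(q) (real-valued formula,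
valid when `q ∈ (0,1)`; conventions `0·log 0 = 0` via Lean's `Real.log 0 = 0`, `x/0 = 0`). -/
noncomputable def klBerR (p q : ℝ) : ℝ :=
  p * Real.log (p / q) + (1 - p) * Real.log ((1 - p) / (1 - q))

open Real InformationTheory

/-- Valid for every `p`, so convexity in `p` needs no case split at the endpoints. -/
lemma klBerR_eq_klFun {p q : ℝ} (hq0 : q ≠ 0) (hq1 : q ≠ 1) :
    klBerR p q = q * klFun (p / q) + (1 - q) * klFun ((1 - p) / (1 - q)) := by
  have : 1 - q ≠ 0 := sub_ne_zero.2 hq1.symm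
  simp only [klBerR, klFun_apply]
  field_simp
  ring

lemma klBerR_self {q : ℝ} (hq0 : q ≠ 0) (hq1 : q ≠ 1) : klBerR q q = 0 := by
  rw [klBerR_eq_klFun hq0 hq1, div_self hq0, div_self (sub_ne_zero.2 hq1.symm), klFun_one]
  ring

lemma convexOn_klBerR_left {q : ℝ} (hq : q ∈ Ioo 0 1) : ConvexOn ℝ (Icc 0 1) (klBerR · q) := by
  have hq1 : 0 < 1 - q := sub_pos.2 hq.2
  refine ⟨convex_Icc 0 1, fun x hx y hy a b ha hb hab => ?_⟩
  have h1 := convexOn_klFun.2 (div_nonneg hx.1 hq.1.le : x / q ∈ Ici 0)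
    (div_nonneg hy.1 hq.1.le : y / q ∈ Ici 0) ha hb hab
  have h2 := convexOn_klFun.2 (div_nonneg (sub_nonneg.2 hx.2) hq1.le : (1 - x) / (1 - q) ∈ Ici 0)
    (div_nonneg (sub_nonneg.2 hy.2) hq1.le : (1 - y) / (1 - q) ∈ Ici 0) ha hb hab
  simp only [smul_eq_mul, klBerR_eq_klFun hq.1.ne' hq.2.ne] at h1 h2 ⊢
  have e1 : a * (x / q) + b * (y / q) = (a * x + b * y) / q := by ring
  have e2 : a * ((1 - x) / (1 - q)) + b * ((1 - y) / (1 - q)) =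
      (1 - (a * x + b * y)) / (1 - q) := by
    rw [show 1 - (a * x + b * y) = a * (1 - x) + b * (1 - y) by linear_combination -hab]; ring
  rw [e1] at h1; rw [e2] at h2
  nlinarith [mul_le_mul_of_nonneg_left h1 hq.1.le, mul_le_mul_of_nonneg_left h2 hq1.le]

lemma klBerR_sub_mul_le {μ z a b : ℝ} (hμ : μ ∈ Ioo 0 1) (hz : 0 ≤ z) (ha : 0 < a) (hab : a ≤ b)
    (hbz : b * z ≤ μ) : b * klBerR (μ - a * z) μ ≤ a * klBerR (μ - b * z) μ := by
  have hb : 0 < b := ha.trans_le hab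
  have hconv := (convexOn_klBerR_left hμ).2 (x := μ - b * z) (y := μ)
    ⟨sub_nonneg.2 hbz, by nlinarith [hμ.2]⟩ ⟨hμ.1.le, hμ.2.le⟩
    (div_nonneg ha.le hb.le) (sub_nonneg.2 ((div_le_one hb).2 hab)) (add_sub_cancel _ _)
  have hpt : a / b * (μ - b * z) + (1 - a / b) * μ = μ - a * z := by field_simp; ring
  simp only [smul_eq_mul, hpt, klBerR_self hμ.1.ne' hμ.2.ne, mul_zero, add_zero] at hconv
  calc b * klBerR (μ - a * z) μ ≤ b * (a / b * klBerR (μ - b * z) μ) :=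
        mul_le_mul_of_nonneg_left hconv hb.le
    _ = a * klBerR (μ - b * z) μ := by field_simp

/-- `log ((1 - x) μ / (x (1 - μ)))` is the optimal parameter in the Chernoff bound. -/
lemma exp_mul_mul_one_sub_add_mul_exp_neg_eq {x μ : ℝ} (hx : x ∈ Ioo 0 1) (hμ : μ ∈ Ioo 0 1) :
    exp (log ((1 - x) * μ / (x * (1 - μ))) * x) *
      (1 - μ + μ * exp (-log ((1 - x) * μ / (x * (1 - μ))))) = exp (-klBerR x μ) := by
  obtain ⟨hx0, hx1⟩ := hx
  obtain ⟨hμ0, hμ1⟩ := hμ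
  have h1x : 0 < 1 - x := sub_pos.2 hx1
  have h1μ : 0 < 1 - μ := sub_pos.2 hμ1
  have hmgf : 1 - μ + μ * exp (-log ((1 - x) * μ / (x * (1 - μ)))) = (1 - μ) / (1 - x) := by
    rw [exp_neg, exp_log (by positivity)]
    field_simp
    ring
  rw [hmgf, ← exp_log (show 0 < (1 - μ) / (1 - x) by positivity), ← exp_add]
  congr 1
  simp only [klBerR]
  rw [log_div (by positivity) (by positivity), log_mul h1x.ne' hμ0.ne', log_mul hx0.ne' h1μ.ne',
    log_div h1μ.ne' h1x.ne', log_div hx0.ne' hμ0.ne', log_div h1x.ne' h1μ.ne']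
  ring

section Chernoff

variable {Ω : Type*} [MeasurableSpace Ω] {P : Measure Ω} {Y : ℕ → Ω → ℝ}

/-- Unlike `Filtration.natural`, time `n` only sees `Y 0, …, Y (n - 1)`, so that the next
increment `Y n` is independent of it. -/
def pastFiltration (Y : ℕ → Ω → ℝ) (hY : ∀ i, Measurable (Y i)) :
    Filtration ℕ ‹MeasurableSpace Ω› where
  seq n := ⨆ j ∈ Iio n, MeasurableSpace.comap (Y j) inferInstance
  mono' _ _ h := biSup_mono fun _ hj => lt_of_lt_of_le hj h
  le' _ := iSup₂_le fun j _ => (hY j).comap_le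

noncomputable def chernoffProcess (Y : ℕ → Ω → ℝ) (μ s : ℝ) (n : ℕ) (ω : Ω) : ℝ :=
  exp (s * (n * μ - ∑ j ∈ Finset.range n, Y j ω))

lemma measurable_pastFiltration {hY : ∀ i, Measurable (Y i)} {i n : ℕ} (hi : i < n) :
    Measurable[pastFiltration Y hY n] (Y i) :=
  measurable_iff_comap_le.2 <|
    le_iSup₂ (f := fun j (_ : j ∈ Iio n) => MeasurableSpace.comap (Y j) inferInstance) i hi

lemma indep_comap_pastFiltration (hY : ∀ i, Measurable (Y i)) (hindep : iIndepFun Y P) (n : ℕ) :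
    Indep (MeasurableSpace.comap (Y n) inferInstance) (pastFiltration Y hY n) P := by
  have h := indep_iSup_of_disjoint (fun i => (hY i).comap_le)
    ((iIndepFun_iff_iIndep _ _ _).1 hindep) (S := {n}) (T := Iio n)
    (Set.disjoint_singleton_left.2 (lt_irrefl n))
  rwa [iSup_singleton] at h

lemma stronglyAdapted_chernoffProcess (hY : ∀ i, Measurable (Y i)) (μ s : ℝ) :
    StronglyAdapted (pastFiltration Y hY) (chernoffProcess Y μ s) := fun _ =>
  (measurable_exp.comp (measurable_const.mul (measurable_const.sub
    (Finset.measurable_sum _ fun _ hj =>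
      measurable_pastFiltration (Finset.mem_range.1 hj))))).stronglyMeasurable

variable [IsProbabilityMeasure P]

lemma integrable_exp_mul_of_mem_Icc {X : Ω → ℝ} (hX : Measurable X) (hb : ∀ ω, X ω ∈ Icc 0 1)
    (t : ℝ) : Integrable (fun ω => exp (t * X ω)) P := by
  refine .of_mem_Icc 0 (exp |t|) (by fun_prop) (ae_of_all _ fun ω => ⟨(exp_pos _).le, ?_⟩)
  exact exp_le_exp.2 <| (le_abs_self _).trans <| by
    rw [abs_mul, abs_of_nonneg (hb ω).1]; nlinarith [abs_nonneg t, (hb ω).1, (hb ω).2]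

lemma mgf_le_one_sub_add_mul_exp {X : Ω → ℝ} (hX : Measurable X) (hb : ∀ ω, X ω ∈ Icc 0 1)
    (t : ℝ) : mgf X P t ≤ 1 - ∫ ω, X ω ∂P + (∫ ω, X ω ∂P) * exp t := by
  have hXint : Integrable X P := .of_mem_Icc 0 1 hX.aemeasurable (ae_of_all _ hb)
  have hpt : ∀ ω, exp (t * X ω) ≤ 1 + (exp t - 1) * X ω := fun ω => by
    have := convexOn_exp.2 (mem_univ t) (mem_univ 0) (hb ω).1 (sub_nonneg.2 (hb ω).2)
      (add_sub_cancel _ _)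
    simp only [smul_eq_mul, mul_zero, add_zero, exp_zero, mul_one] at this
    rw [mul_comm] at this
    linarith
  calc mgf X P t ≤ ∫ ω, (1 + (exp t - 1) * X ω) ∂P :=
        integral_mono (integrable_exp_mul_of_mem_Icc hX hb t)
          ((integrable_const 1).add (hXint.const_mul _)) hpt
    _ = 1 - ∫ ω, X ω ∂P + (∫ ω, X ω ∂P) * exp t := by
        rw [integral_add (integrable_const 1) (hXint.const_mul _), integral_const_mul]
        simp only [integral_const, probReal_univ, smul_eq_mul, mul_one]
        ring

lemma integrable_chernoffProcess (hY : ∀ i, Measurable (Y i)) (hb : ∀ i ω, Y i ω ∈ Icc 0 1)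
    (μ : ℝ) {s : ℝ} (hs : 0 ≤ s) (n : ℕ) : Integrable (chernoffProcess Y μ s n) P := by
  refine .of_mem_Icc 0 (exp (s * (n * μ))) (by unfold chernoffProcess; fun_prop)
    (ae_of_all _ fun ω => ⟨(exp_pos _).le, exp_le_exp.2 ?_⟩)
  have := Finset.sum_nonneg fun j (_ : j ∈ Finset.range n) => (hb j ω).1
  nlinarith

lemma one_le_integral_exp_mul_sub {X : Ω → ℝ} (hX : Integrable X P) (s : ℝ)
    (hexp : Integrable (fun ω => exp (s * (∫ x, X x ∂P - X ω))) P) :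
    1 ≤ ∫ ω, exp (s * (∫ x, X x ∂P - X ω)) ∂P := by
  have hlin : Integrable (fun ω => s * (∫ x, X x ∂P - X ω)) P :=
    ((integrable_const _).sub hX).const_mul s
  calc (1 : ℝ) = ∫ ω, (s * (∫ x, X x ∂P - X ω) + 1) ∂P := by
        rw [integral_add hlin (integrable_const 1), integral_const_mul,
          integral_sub (integrable_const _) hX]
        simp
    _ ≤ _ := integral_mono (hlin.add (integrable_const 1)) hexp fun ω => add_one_le_exp _

lemma submartingale_chernoffProcess (hY : ∀ i, Measurable (Y i)) (hindep : iIndepFun Y P)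
    (hb : ∀ i ω, Y i ω ∈ Icc 0 1) {μ : ℝ} (hmean : ∀ i, ∫ ω, Y i ω ∂P = μ) {s : ℝ}
    (hs : 0 ≤ s) : Submartingale (chernoffProcess Y μ s) (pastFiltration Y hY) P := by
  have hXint := integrable_chernoffProcess (P := P) hY hb μ hs
  have hstep : ∀ n, chernoffProcess Y μ s (n + 1) =
      chernoffProcess Y μ s n * fun ω => exp (s * (μ - Y n ω)) := fun n => by
    ext ω
    simp only [chernoffProcess, Pi.mul_apply, ← exp_add, Finset.sum_range_succ, Nat.cast_succ]
    ring_nf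
  have hEint : ∀ n, Integrable (fun ω => exp (s * (μ - Y n ω))) P := fun n =>
    .of_mem_Icc 0 (exp (s * μ)) (by fun_prop) (ae_of_all _ fun ω =>
      ⟨(exp_pos _).le, exp_le_exp.2 (by nlinarith [(hb n ω).1])⟩)
  refine submartingale_nat (stronglyAdapted_chernoffProcess hY μ s) hXint fun n => ?_
  have hEmeas : StronglyMeasurable[MeasurableSpace.comap (Y n) inferInstance]
      fun ω => exp (s * (μ - Y n ω)) :=
    (measurable_exp.comp (measurable_const.mul
      (measurable_const.sub (comap_measurable (Y n))))).stronglyMeasurable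
  have hYint : Integrable (Y n) P := .of_mem_Icc 0 1 (hY n).aemeasurable (ae_of_all _ (hb n))
  rw [hstep]
  filter_upwards [condExp_mul_of_stronglyMeasurable_left (stronglyAdapted_chernoffProcess hY μ s n)
      (hstep n ▸ hXint (n + 1)) (hEint n),
    condExp_indep_eq (hY n).comap_le ((pastFiltration Y hY).le n) hEmeas
      (indep_comap_pastFiltration hY hindep n)] with ω h1 h2
  rw [h1, Pi.mul_apply, h2]
  refine le_mul_of_one_le_right (exp_pos _).le ?_
  simpa only [hmean] using one_le_integral_exp_mul_sub hYint s (by simpa only [hmean] using hEint n)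

lemma integral_chernoffProcess_le (hY : ∀ i, Measurable (Y i)) (hindep : iIndepFun Y P)
    (hb : ∀ i ω, Y i ω ∈ Icc 0 1) {μ : ℝ} (hmean : ∀ i, ∫ ω, Y i ω ∂P = μ) (s : ℝ) (M : ℕ) :
    ∫ ω, chernoffProcess Y μ s M ω ∂P ≤ exp (s * (M * μ)) * (1 - μ + μ * exp (-s)) ^ M := by
  have hmgf : mgf (∑ j ∈ Finset.range M, Y j) P (-s) ≤ (1 - μ + μ * exp (-s)) ^ M := by
    rw [hindep.mgf_sum hY]
    calc ∏ j ∈ Finset.range M, mgf (Y j) P (-s) ≤ ∏ _j ∈ Finset.range M, (1 - μ + μ * exp (-s)) :=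
          Finset.prod_le_prod (fun _ _ => mgf_nonneg) fun j _ =>
            hmean j ▸ mgf_le_one_sub_add_mul_exp (hY j) (hb j) (-s)
      _ = _ := by rw [Finset.prod_const, Finset.card_range]
  calc ∫ ω, chernoffProcess Y μ s M ω ∂P
      = exp (s * (M * μ)) * mgf (∑ j ∈ Finset.range M, Y j) P (-s) := by
        rw [mgf, ← integral_const_mul]
        congr 1 with ω
        simp only [chernoffProcess, Finset.sum_apply, ← exp_add]
        ring_nf
    _ ≤ _ := mul_le_mul_of_nonneg_left hmgf (exp_pos _).le

lemma measure_exists_sum_le_le (hY : ∀ i, Measurable (Y i)) (hindep : iIndepFun Y P)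
    (hb : ∀ i ω, Y i ω ∈ Icc 0 1) {μ : ℝ} (hmean : ∀ i, ∫ ω, Y i ω ∂P = μ) {s : ℝ} (hs : 0 ≤ s)
    (g : ℝ) (M : ℕ) :
    P {ω | ∃ t ≤ M, ∑ j ∈ Finset.range t, Y j ω ≤ t * μ - g} ≤
      ENNReal.ofReal (exp (s * (M * μ - g)) * (1 - μ + μ * exp (-s)) ^ M) := by
  set X := chernoffProcess Y μ s
  set ε := (exp (s * g)).toNNReal
  have hε : (ε : ℝ) = exp (s * g) := Real.coe_toNNReal _ (exp_pos _).le
  have hsub : {ω | ∃ t ≤ M, ∑ j ∈ Finset.range t, Y j ω ≤ t * μ - g} ⊆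
      {ω | (ε : ℝ) ≤ (Finset.range (M + 1)).sup' Finset.nonempty_range_add_one fun k => X k ω} := by
    rintro ω ⟨t, htM, ht⟩
    refine Finset.le_sup'_of_le (fun k => X k ω) (Finset.mem_range_succ_iff.2 htM) ?_
    rw [hε]
    exact exp_le_exp.2 (mul_le_mul_of_nonneg_left (by linarith) hs)
  have hdoob := (maximal_ineq (submartingale_chernoffProcess hY hindep hb hmean hs)
    (fun _ _ => (exp_pos _).le) (ε := ε) M).trans <| ENNReal.ofReal_le_ofReal <|
    (setIntegral_le_integral ((submartingale_chernoffProcess hY hindep hb hmean hs).integrable M)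
      (ae_of_all _ fun ω => (exp_pos _).le)).trans
      (integral_chernoffProcess_le hY hindep hb hmean s M)
  calc P {ω | ∃ t ≤ M, ∑ j ∈ Finset.range t, Y j ω ≤ t * μ - g}
      ≤ ENNReal.ofReal (exp (s * (M * μ)) * (1 - μ + μ * exp (-s)) ^ M) / ε := by
        rw [ENNReal.le_div_iff_mul_le (by simp [ε, exp_pos]) (by simp), mul_comm]
        refine le_trans ?_ hdoob
        gcongr
    _ = _ := by
        rw [show (ε : ENNReal) = ENNReal.ofReal (exp (s * g)) from rfl,
          ← ENNReal.ofReal_div_of_pos (exp_pos _)]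
        congr 1
        rw [mul_div_right_comm, ← exp_sub, mul_sub]

lemma measure_exists_sum_le_le_exp_klBerR (hY : ∀ i, Measurable (Y i)) (hindep : iIndepFun Y P)
    (hb : ∀ i ω, Y i ω ∈ Icc 0 1) {μ : ℝ} (hμ : μ ∈ Ioo 0 1) (hmean : ∀ i, ∫ ω, Y i ω ∂P = μ)
    {x : ℝ} (hx : 0 < x) (hxμ : x ≤ μ) (M : ℕ) :
    P {ω | ∃ t ≤ M, ∑ j ∈ Finset.range t, Y j ω ≤ t * μ - M * (μ - x)} ≤
      ENNReal.ofReal (exp (-(M * klBerR x μ))) := by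
  set s := log ((1 - x) * μ / (x * (1 - μ)))
  have hs : 0 ≤ s := log_nonneg <| by
    rw [le_div_iff₀ (mul_pos hx (sub_pos.2 hμ.2))]
    nlinarith [hμ.2]
  refine (measure_exists_sum_le_le hY hindep hb hmean hs _ M).trans_eq ?_
  have hkl := exp_mul_mul_one_sub_add_mul_exp_neg_eq ⟨hx, hxμ.trans_lt hμ.2⟩ hμ
  rw [show s * (M * μ - M * (μ - x)) = M * (s * x) by ring, exp_nat_mul, ← mul_pow, hkl,
    ← exp_nat_mul, mul_neg]

lemma measure_biUnion_mean_lt_le (hY : ∀ i, Measurable (Y i)) (hindep : iIndepFun Y P)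
    (hb : ∀ i ω, Y i ω ∈ Icc 0 1) {μ : ℝ} (hμ : μ ∈ Ioo 0 1) (hmean : ∀ i, ∫ ω, Y i ω ∂P = μ)
    {c₀ L : ℝ} (hc₀ : 0 < c₀) {z : ℕ → ℝ} {M : ℕ} (T : Finset ℕ)
    (hT : ∀ t ∈ T, 0 < t ∧ t ≤ M ∧ c₀ * M ≤ t)
    (hz : ∀ t ∈ T, z t < μ → 0 < z t ∧ L ≤ t * klBerR (μ - c₀ * z t) μ) :
    P (⋃ t ∈ T, {ω | (∑ j ∈ Finset.range t, Y j ω) / t - μ < -z t}) ≤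
      ENNReal.ofReal (exp (-(L / c₀))) := by
  set T' := T.filter (z · < μ)
  have hT' : (⋃ t ∈ T, {ω | (∑ j ∈ Finset.range t, Y j ω) / t - μ < -z t}) =
      ⋃ t ∈ T', {ω | ∑ j ∈ Finset.range t, Y j ω < t * (μ - z t)} := by
    ext ω
    simp only [mem_iUnion, mem_ofPred_eq, Finset.mem_filter, T', exists_prop]
    refine exists_congr fun t => ⟨fun ⟨ht, hlt⟩ => ?_, fun ⟨⟨ht, _⟩, hlt⟩ => ?_⟩
    · have htpos : (0 : ℝ) < t := Nat.cast_pos.2 (hT t ht).1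
      have hS := Finset.sum_nonneg fun j (_ : j ∈ Finset.range t) => (hb j ω).1
      rw [sub_lt_iff_lt_add, div_lt_iff₀ htpos] at hlt
      exact ⟨⟨ht, by nlinarith⟩, by linarith⟩
    · have htpos : (0 : ℝ) < t := Nat.cast_pos.2 (hT t ht).1
      rw [sub_lt_iff_lt_add, div_lt_iff₀ htpos]
      exact ⟨ht, by linarith⟩
  rw [hT']
  rcases T'.eq_empty_or_nonempty with hempty | hne
  · simp [hempty]
  -- `t₀` minimising `t * z t` gives one level `t₀ * z t₀` that every event of the block crosses
  obtain ⟨t₀, ht₀T', ht₀min⟩ := T'.exists_min_image (fun t => t * z t) hne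
  obtain ⟨ht₀T, hzt₀⟩ := Finset.mem_filter.1 ht₀T'
  obtain ⟨ht₀pos, ht₀M, hc₀t₀⟩ := hT t₀ ht₀T
  obtain ⟨hz₀, hL⟩ := hz t₀ ht₀T hzt₀
  have hMpos : (0 : ℝ) < M := Nat.cast_pos.2 (ht₀pos.trans_le ht₀M)
  set b := (t₀ : ℝ) / M
  have hb1 : b ≤ 1 := (div_le_one hMpos).2 (Nat.cast_le.2 ht₀M)
  have hc₀b : c₀ ≤ b := (le_div_iff₀ hMpos).2 hc₀t₀
  have hbz : b * z t₀ < μ := lt_of_le_of_lt (mul_le_of_le_one_left hz₀.le hb1) hzt₀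
  have hsub : (⋃ t ∈ T', {ω | ∑ j ∈ Finset.range t, Y j ω < t * (μ - z t)}) ⊆
      {ω | ∃ t ≤ M, ∑ j ∈ Finset.range t, Y j ω ≤ t * μ - M * (μ - (μ - b * z t₀))} := by
    simp only [subset_def, mem_iUnion, mem_ofPred_eq]
    rintro ω ⟨t, ht, hlt⟩
    have hmin : (t₀ : ℝ) * z t₀ ≤ t * z t := ht₀min t ht
    have hMb : (M : ℝ) * b = t₀ := mul_div_cancel₀ _ hMpos.ne'
    refine ⟨t, (hT t (Finset.mem_filter.1 ht).1).2.1, ?_⟩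
    nlinarith
  have hkl : L / c₀ ≤ M * klBerR (μ - b * z t₀) μ := by
    have h := klBerR_sub_mul_le hμ hz₀.le hc₀ hc₀b hbz.le
    rw [div_le_iff₀ hc₀]
    calc L ≤ t₀ * klBerR (μ - c₀ * z t₀) μ := hL
      _ = M * (b * klBerR (μ - c₀ * z t₀) μ) := by rw [← mul_assoc, mul_div_cancel₀ _ hMpos.ne']
      _ ≤ M * (c₀ * klBerR (μ - b * z t₀) μ) := mul_le_mul_of_nonneg_left h hMpos.le
      _ = _ := by ring
  calc _ ≤ _ := measure_mono hsub
    _ ≤ _ := measure_exists_sum_le_le_exp_klBerR hY hindep hb hμ hmean (by linarith)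
        (by nlinarith) M
    _ ≤ _ := ENNReal.ofReal_le_ofReal (exp_le_exp.2 (neg_le_neg hkl))

end Chernoff

section UnionBound

variable {Ω : Type*} [MeasurableSpace Ω] {P : Measure Ω}

lemma measure_biUnion_finset_le_ofReal {ι : Type*} {s : Finset ι} {A : ι → Set Ω} {a : ι → ℝ}
    (ha : ∀ i ∈ s, 0 ≤ a i) (h : ∀ i ∈ s, P (A i) ≤ ENNReal.ofReal (a i)) :
    P (⋃ i ∈ s, A i) ≤ ENNReal.ofReal (∑ i ∈ s, a i) :=
  (measure_biUnion_finset_le s A).trans <|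
    (Finset.sum_le_sum h).trans_eq (ENNReal.ofReal_sum_of_nonneg ha).symm

lemma measure_union_iUnion_le_ofReal {ι : Type*} [Countable ι] {s : Set Ω} {A : ι → Set Ω}
    {a : ℝ} {b : ι → ℝ} (ha0 : 0 ≤ a) (hb0 : ∀ k, 0 ≤ b k) (hb : Summable b)
    (hs : P s ≤ ENNReal.ofReal a) (hA : ∀ k, P (A k) ≤ ENNReal.ofReal (b k)) :
    P (s ∪ ⋃ k, A k) ≤ ENNReal.ofReal (a + ∑' k, b k) := by
  rw [ENNReal.ofReal_add ha0 (tsum_nonneg hb0), ENNReal.ofReal_tsum_of_nonneg hb0 hb]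
  exact (measure_union_le _ _).trans
    (add_le_add hs ((measure_iUnion_le _).trans (ENNReal.tsum_le_tsum hA)))

end UnionBound

lemma exists_mem_Ico_dyadic {l t : ℕ} (ht : 2 ^ l ≤ t) :
    ∃ k, ∃ i ∈ Finset.Ico (2 ^ l) (2 * 2 ^ l), t ∈ Finset.Ico (i * 2 ^ k) ((i + 1) * 2 ^ k) := by
  have ht0 : t ≠ 0 := (Nat.pos_of_ne_zero (pow_ne_zero l two_ne_zero)).trans_le ht |>.ne'
  have hlog : l ≤ Nat.log 2 t := (Nat.le_log_iff_pow_le one_lt_two ht0).2 ht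
  set k := Nat.log 2 t - l
  have hlo : 2 ^ l * 2 ^ k ≤ t := by
    rw [← pow_add, Nat.add_sub_cancel' hlog]; exact Nat.pow_log_le_self 2 ht0
  have hhi : t < 2 * 2 ^ l * 2 ^ k := by
    rw [← pow_succ', ← pow_add, show l + 1 + k = Nat.log 2 t + 1 by omega]
    exact Nat.lt_pow_succ_log_self one_lt_two t
  have hk : 0 < 2 ^ k := by positivity
  refine ⟨k, t / 2 ^ k, Finset.mem_Ico.2 ⟨(Nat.le_div_iff_mul_le hk).2 hlo,
    (Nat.div_lt_iff_lt_mul hk).2 hhi⟩, Finset.mem_Ico.2 ⟨Nat.div_mul_le_self t _, ?_⟩⟩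
  rw [add_mul, one_mul]
  exact Nat.lt_div_mul_add hk

lemma setOf_exists_pos_subset_dyadic {α : Type*} (A : ℕ → Set α) {N l : ℕ} (hN : N = 2 ^ l) :
    {x | ∃ t, 0 < t ∧ x ∈ A t} ⊆ (⋃ t ∈ Finset.Ico 1 N, A t) ∪
      ⋃ k, ⋃ i ∈ Finset.Ico N (2 * N), ⋃ t ∈ Finset.Ico (i * 2 ^ k) ((i + 1) * 2 ^ k), A t := by
  subst hN
  rintro x ⟨t, ht, hx⟩
  rcases lt_or_ge t (2 ^ l) with hlt | hge
  · exact Or.inl (mem_biUnion (Finset.mem_Ico.2 ⟨ht, hlt⟩) hx)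
  · obtain ⟨k, i, hi, hti⟩ := exists_mem_Ico_dyadic hge
    exact Or.inr (mem_iUnion.2 ⟨k, mem_biUnion hi (mem_biUnion hti hx)⟩)

lemma natCast_add_one_le_logb_two_mul {m t : ℕ} (ht : 2 ^ m ≤ t) :
    (m : ℝ) + 1 ≤ logb 2 (2 * t) := by
  have h : (2 : ℝ) ^ (m + 1) ≤ 2 * t := by
    rw [pow_succ, mul_comm]; exact mul_le_mul_of_nonneg_left (by exact_mod_cast ht) zero_le_two
  calc (m : ℝ) + 1 = logb 2 ((2 : ℝ) ^ (m + 1)) := by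
        rw [logb_pow, logb_self_eq_one one_lt_two]; push_cast; ring
    _ ≤ _ := logb_le_logb_of_le one_lt_two (by positivity) h

lemma logb_two_two_mul_pos {t : ℕ} (ht : 0 < t) : 0 < logb 2 (2 * t) :=
  lt_of_lt_of_le (by norm_num) (natCast_add_one_le_logb_two_mul (m := 0) ht)

lemma div_add_one_mul_add_one_le {N i : ℝ} (hN : 0 ≤ N) (hi : N ≤ i) :
    N / (N + 1) * (i + 1) ≤ i := by
  rw [div_mul_eq_mul_div, div_le_iff₀ (by linarith)]
  nlinarith

lemma exp_neg_log_div {κ δ u : ℝ} (hκ : 0 < κ) (hδ : 0 < δ) (hu : 0 < u) (c : ℝ) :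
    exp (-(log (κ * u / δ) / c)) = (δ / κ) ^ (1 / c) * u ^ (-(1 / c)) := by
  rw [show -(log (κ * u / δ) / c) = log (κ * u / δ) * (-(1 / c)) by ring,
    ← rpow_def_of_pos (by positivity), mul_div_right_comm, mul_rpow (by positivity) hu.le,
    rpow_neg (by positivity), ← inv_rpow (by positivity), inv_div]

lemma div_rpow_mul_eq_self {δ S a : ℝ} (hδ : 0 < δ) (hS : 0 < S) (ha : 0 < a) :
    (δ / (δ ^ (1 / (a + 1)) * S ^ (a / (a + 1)))) ^ ((a + 1) / a) * S = δ := by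
  have hsplit : δ = δ ^ (1 / (a + 1)) * δ ^ (a / (a + 1)) := by
    rw [← rpow_add hδ, show 1 / (a + 1) + a / (a + 1) = 1 by field_simp; ring, rpow_one]
  have h : δ / (δ ^ (1 / (a + 1)) * S ^ (a / (a + 1))) = (δ / S) ^ (a / (a + 1)) := by
    nth_rewrite 1 [hsplit]
    rw [mul_div_mul_left _ _ (rpow_pos_of_pos hδ _).ne', div_rpow hδ.le hS.le]
  rw [h, ← rpow_mul (div_nonneg hδ.le hS.le), show a / (a + 1) * ((a + 1) / a) = 1 by field_simp,
    rpow_one, div_mul_cancel₀ _ hS.ne']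

lemma summable_natCast_add_rpow_neg (l : ℕ) {q : ℝ} (hq : 1 < q) :
    Summable fun k : ℕ => ((k : ℝ) + l + 1) ^ (-q) :=
  ((summable_nat_add_iff (f := fun n : ℕ => (n : ℝ) ^ (-q)) (l + 1)).2
    (Real.summable_nat_rpow.2 (neg_lt_neg hq))).congr fun k => by push_cast; ring_nf

lemma lil_normaliser_pos {N : ℕ} (hN : 0 < N) (l : ℕ) {q : ℝ} (hq : 1 < q) :
    0 < (if l ≠ 0 then ∑ t ∈ Finset.Icc 1 N, logb 2 (2 * (t : ℝ)) ^ (-q) else 0) +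
      N * ∑' k : ℕ, ((k : ℝ) + l + 1) ^ (-q) :=
  add_pos_of_nonneg_of_pos
    (by split_ifs; exacts [Finset.sum_nonneg fun t ht =>
      rpow_nonneg (logb_two_two_mul_pos (Finset.mem_Icc.1 ht).1).le _, le_rfl])
    (mul_pos (Nat.cast_pos.2 hN)
      ((summable_natCast_add_rpow_neg l hq).tsum_pos (fun _ => by positivity) 0 (by positivity)))

lemma sum_Ico_add_tsum_sum_Ico_le {N l : ℕ} (hN : N = 2 ^ l) {p C : ℝ} (hC : 0 ≤ C) :
    ∑ t ∈ Finset.Ico 1 N, C * logb 2 (2 * t) ^ (-p) +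
        ∑' k : ℕ, ∑ _i ∈ Finset.Ico N (2 * N), C * ((k : ℝ) + l + 1) ^ (-p) ≤
      C * ((if l ≠ 0 then ∑ t ∈ Finset.Icc 1 N, logb 2 (2 * (t : ℝ)) ^ (-p) else 0) +
        (N : ℝ) * ∑' k : ℕ, ((k : ℝ) + l + 1) ^ (-p)) := by
  have hsmall : ∑ t ∈ Finset.Ico 1 N, logb 2 (2 * t) ^ (-p) ≤
      if l ≠ 0 then ∑ t ∈ Finset.Icc 1 N, logb 2 (2 * (t : ℝ)) ^ (-p) else 0 := by
    split_ifs with hl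
    · exact Finset.sum_le_sum_of_subset_of_nonneg Finset.Ico_subset_Icc_self fun t ht _ =>
        rpow_nonneg (logb_two_two_mul_pos (Finset.mem_Icc.1 ht).1).le _
    · simp [hN, not_not.1 hl]
  have hcard : (Finset.Ico N (2 * N)).card = N := by simp; omega
  simp only [Finset.sum_const, hcard, nsmul_eq_mul, ← Finset.mul_sum]
  rw [tsum_mul_left, tsum_mul_left, mul_add, mul_left_comm]
  gcongr

section Boundary

/-- The defining equation of `z t`, relaxed to an inequality, wherever `z t < μ`. -/
def IsLILBoundary (μ c₀ κ δ : ℝ) (z : ℕ → ℝ) : Prop :=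
  ∀ t : ℕ, 0 < t → z t < μ → 0 < z t ∧ log (κ * logb 2 (2 * t) / δ) ≤ t * klBerR (μ - c₀ * z t) μ

variable {Ω : Type*} [MeasurableSpace Ω] {P : Measure Ω} [IsProbabilityMeasure P]
  {Y : ℕ → Ω → ℝ} {μ c₀ κ δ : ℝ} {z : ℕ → ℝ}

lemma measure_mean_lt_le_of_isLILBoundary (hY : ∀ i, Measurable (Y i)) (hindep : iIndepFun Y P)
    (hb : ∀ i ω, Y i ω ∈ Icc 0 1) (hμ : μ ∈ Ioo 0 1) (hmean : ∀ i, ∫ ω, Y i ω ∂P = μ)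
    (hz : IsLILBoundary μ c₀ κ δ z) (hc₀ : 0 < c₀) (hc₀1 : c₀ ≤ 1) (hκ : 0 < κ) (hδ : 0 < δ)
    {t : ℕ} (ht : 0 < t) :
    P {ω | (∑ j ∈ Finset.range t, Y j ω) / t - μ < -z t} ≤
      ENNReal.ofReal ((δ / κ) ^ (1 / c₀) * logb 2 (2 * t) ^ (-(1 / c₀))) := by
  have h := measure_biUnion_mean_lt_le hY hindep hb hμ hmean hc₀ (M := t) {t}
    (fun s hs => by
      rw [Finset.mem_singleton.1 hs]
      exact ⟨ht, le_rfl, mul_le_of_le_one_left (Nat.cast_nonneg _) hc₀1⟩)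
    (fun s hs => by rw [Finset.mem_singleton.1 hs]; exact hz t ht)
  rwa [Finset.set_biUnion_singleton, exp_neg_log_div hκ hδ (logb_two_two_mul_pos ht)] at h

lemma measure_biUnion_dyadic_le_of_isLILBoundary (hY : ∀ i, Measurable (Y i))
    (hindep : iIndepFun Y P) (hb : ∀ i ω, Y i ω ∈ Icc 0 1) (hμ : μ ∈ Ioo 0 1)
    (hmean : ∀ i, ∫ ω, Y i ω ∂P = μ) (hz : IsLILBoundary μ c₀ κ δ z) (hc₀ : 0 < c₀)
    (hκ : 0 < κ) (hδ : 0 < δ) {l i : ℕ} (hi : 2 ^ l ≤ i) (hc₀i : c₀ * (i + 1) ≤ i) (k : ℕ) :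
    P (⋃ t ∈ Finset.Ico (i * 2 ^ k) ((i + 1) * 2 ^ k),
        {ω | (∑ j ∈ Finset.range t, Y j ω) / t - μ < -z t}) ≤
      ENNReal.ofReal ((δ / κ) ^ (1 / c₀) * ((k : ℝ) + l + 1) ^ (-(1 / c₀))) := by
  have hu : (0 : ℝ) < k + l + 1 := by positivity
  have hT : ∀ t ∈ Finset.Ico (i * 2 ^ k) ((i + 1) * 2 ^ k), 2 ^ (l + k) ≤ t ∧
      t ≤ (i + 1) * 2 ^ k ∧ c₀ * ((i + 1) * 2 ^ k : ℕ) ≤ t := fun t ht => by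
    obtain ⟨hlo, hhi⟩ := Finset.mem_Ico.1 ht
    refine ⟨pow_add 2 l k ▸ (Nat.mul_le_mul_right _ hi).trans hlo, hhi.le, ?_⟩
    calc c₀ * ((i + 1) * 2 ^ k : ℕ) = c₀ * (i + 1) * 2 ^ k := by push_cast; ring
      _ ≤ i * 2 ^ k := mul_le_mul_of_nonneg_right hc₀i (by positivity)
      _ ≤ t := by exact_mod_cast hlo
  have h := measure_biUnion_mean_lt_le hY hindep hb hμ hmean hc₀ (L := log (κ * (k + l + 1) / δ))
    _ (fun t ht => ⟨(Nat.two_pow_pos _).trans_le (hT t ht).1, (hT t ht).2⟩)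
    (fun t ht hzt => by
      obtain ⟨hz0, hlevel⟩ := hz t ((Nat.two_pow_pos _).trans_le (hT t ht).1) hzt
      refine ⟨hz0, le_trans (log_le_log (by positivity) ?_) hlevel⟩
      gcongr
      simpa [add_comm (l : ℝ)] using natCast_add_one_le_logb_two_mul (hT t ht).1)
  rwa [exp_neg_log_div hκ hδ hu] at h

end Boundary

theorem lil_klucb_anytime_lower_deviation_general
    {Ω : Type*} [MeasurableSpace Ω] (P : Measure Ω) [IsProbabilityMeasure P]
    (Y : ℕ → Ω → ℝ) (hmeas : ∀ i, Measurable (Y i))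
    (hindep : iIndepFun Y P)
    (hbdd : ∀ i ω, Y i ω ∈ Set.Icc (0:ℝ) 1)
    (μ : ℝ) (hμ : μ ∈ Set.Ioo (0:ℝ) 1)
    (hmean : ∀ i, ∫ ω, Y i ω ∂P = μ)
    (δ : ℝ) (hδ : δ ∈ Set.Ioo (0:ℝ) 1)
    (l N : ℕ) (hN : N = 2 ^ l)
    (κ : ℝ)
    (hκ : κ = δ ^ ((1:ℝ)/((N:ℝ)+1)) *
      ((if l ≠ 0 then
          ∑ t ∈ Finset.Icc 1 N, (Real.logb 2 (2*(t:ℝ))) ^ (-(((N:ℝ)+1)/(N:ℝ)))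
        else 0)
        + (N:ℝ) * ∑' k : ℕ, ((k:ℝ) + (l:ℝ) + 1) ^ (-(((N:ℝ)+1)/(N:ℝ))))
        ^ ((N:ℝ)/((N:ℝ)+1)))
    (f : ℕ → ℝ)
    (hf : ∀ t : ℕ, f t = Real.log (κ * Real.logb 2 (2*(t:ℝ)) / δ) / (t:ℝ))
    (z : ℕ → ℝ)
    (hz : ∀ t : ℕ, 0 < t →
      z t ∈ Set.Ioc (0:ℝ) μ ∧
      ((∃ y ∈ Set.Ioc (0:ℝ) μ,
          klBerR (μ - ((N:ℝ)/((N:ℝ)+1)) * y) μ = f t) →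
        klBerR (μ - ((N:ℝ)/((N:ℝ)+1)) * z t) μ = f t) ∧
      ((¬ ∃ y ∈ Set.Ioc (0:ℝ) μ,
          klBerR (μ - ((N:ℝ)/((N:ℝ)+1)) * y) μ = f t) →
        z t = μ)) :
    P {ω | ∃ t : ℕ, 0 < t ∧
        (∑ j ∈ Finset.range t, Y j ω) / (t:ℝ) - μ < -(z t)} ≤ ENNReal.ofReal δ := by
  have hN0 : 0 < N := hN ▸ Nat.two_pow_pos l
  set p : ℝ := ((N : ℝ) + 1) / N
  have hp : 1 < p := (one_lt_div (by positivity)).2 (lt_add_one _)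
  have hinv : 1 / ((N : ℝ) / (N + 1)) = p := one_div_div _ _
  have hS := lil_normaliser_pos hN0 l hp
  have hκ0 : 0 < κ := hκ ▸ mul_pos (rpow_pos_of_pos hδ.1 _) (rpow_pos_of_pos hS _)
  have hboundary : IsLILBoundary μ (N / (N + 1)) κ δ z := fun t ht hzt => by
    obtain ⟨⟨hz0, -⟩, hsol, hnosol⟩ := hz t ht
    refine ⟨hz0, le_of_eq ?_⟩
    rw [hsol (not_not.1 (mt hnosol hzt.ne)), hf t, mul_div_cancel₀ _ (Nat.cast_pos.2 ht).ne']
  have hC : 0 ≤ (δ / κ) ^ p := rpow_nonneg (div_nonneg hδ.1.le hκ0.le) _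
  have hsmall : ∀ t ∈ Finset.Ico 1 N, 0 ≤ (δ / κ) ^ p * logb 2 (2 * t) ^ (-p) := fun t ht =>
    mul_nonneg hC (rpow_nonneg (logb_two_two_mul_pos (Finset.mem_Ico.1 ht).1).le _)
  calc _ ≤ _ := measure_mono (setOf_exists_pos_subset_dyadic
        (fun t => {ω | (∑ j ∈ Finset.range t, Y j ω) / t - μ < -z t}) hN)
    _ ≤ ENNReal.ofReal (∑ t ∈ Finset.Ico 1 N, (δ / κ) ^ p * logb 2 (2 * t) ^ (-p) +
          ∑' k : ℕ, ∑ _i ∈ Finset.Ico N (2 * N), (δ / κ) ^ p * ((k : ℝ) + l + 1) ^ (-p)) :=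
        measure_union_iUnion_le_ofReal (Finset.sum_nonneg hsmall)
          (fun _ => Finset.sum_nonneg fun _ _ => mul_nonneg hC (by positivity))
          (summable_sum fun _ _ => (summable_natCast_add_rpow_neg l hp).mul_left _)
          (measure_biUnion_finset_le_ofReal hsmall fun t ht =>
            hinv ▸ measure_mean_lt_le_of_isLILBoundary hmeas hindep hbdd hμ hmean hboundary
              (by positivity) (div_le_one_of_le₀ (by linarith) (by positivity)) hκ0 hδ.1
              (Finset.mem_Ico.1 ht).1)
          (fun k => measure_biUnion_finset_le_ofReal (fun _ _ => mul_nonneg hC (by positivity))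
            fun i hi => hinv ▸ measure_biUnion_dyadic_le_of_isLILBoundary hmeas hindep hbdd hμ
              hmean hboundary (by positivity) hκ0 hδ.1 (hN ▸ (Finset.mem_Ico.1 hi).1)
              (div_add_one_mul_add_one_le (by positivity)
                (by exact_mod_cast (Finset.mem_Ico.1 hi).1)) k)
    _ ≤ ENNReal.ofReal ((δ / κ) ^ p * _) :=
        ENNReal.ofReal_le_ofReal (sum_Ico_add_tsum_sum_Ico_le hN hC)
    _ = ENNReal.ofReal δ := by rw [hκ, div_rpow_mul_eq_self hδ.1 hS (Nat.cast_pos.2 hN0)]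

/-- Theorem (anytime upper deviation bound, Theorem 2(ii)):
with probability at least `1 - δ`, `μ̂_t - μ ≥ -z_t` for all `t ≥ 1`. -/
theorem lil_klucb_anytime_lower_deviation
    {Ω : Type*} [MeasurableSpace Ω] (P : Measure Ω) [IsProbabilityMeasure P]
    (Y : ℕ → Ω → ℝ) (hmeas : ∀ i, Measurable (Y i))
    (hindep : iIndepFun Y P)
    (hident : ∀ i, IdentDistrib (Y i) (Y 0) P P)
    (hbdd : ∀ i ω, Y i ω ∈ Set.Icc (0:ℝ) 1)
    (μ : ℝ) (hμ : μ ∈ Set.Ioo (0:ℝ) 1)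
    (hmean : ∀ i, ∫ ω, Y i ω ∂P = μ)
    (δ : ℝ) (hδ : δ ∈ Set.Ioo (0:ℝ) 1)
    (l N : ℕ) (hN : N = 2 ^ l)
    (κ : ℝ)
    (hκ : κ = δ ^ ((1:ℝ)/((N:ℝ)+1)) *
      ((if l ≠ 0 then
          ∑ t ∈ Finset.Icc 1 N, (Real.logb 2 (2*(t:ℝ))) ^ (-(((N:ℝ)+1)/(N:ℝ)))
        else 0)
        + (N:ℝ) * ∑' k : ℕ, ((k:ℝ) + (l:ℝ) + 1) ^ (-(((N:ℝ)+1)/(N:ℝ))))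
        ^ ((N:ℝ)/((N:ℝ)+1)))
    (f : ℕ → ℝ)
    (hf : ∀ t : ℕ, f t = Real.log (κ * Real.logb 2 (2*(t:ℝ)) / δ) / (t:ℝ))
    (z : ℕ → ℝ)
    (hz : ∀ t : ℕ, 0 < t →
      z t ∈ Set.Ioc (0:ℝ) μ ∧
      ((∃ y ∈ Set.Ioc (0:ℝ) μ,
          klBerR (μ - ((N:ℝ)/((N:ℝ)+1)) * y) μ = f t) →
        klBerR (μ - ((N:ℝ)/((N:ℝ)+1)) * z t) μ = f t) ∧
      ((¬ ∃ y ∈ Set.Ioc (0:ℝ) μ,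
          klBerR (μ - ((N:ℝ)/((N:ℝ)+1)) * y) μ = f t) →
        z t = μ)) :
    P {ω | ∃ t : ℕ, 0 < t ∧
        (∑ j ∈ Finset.range t, Y j ω) / (t:ℝ) - μ < -(z t)} ≤ ENNReal.ofReal δ :=
  lil_klucb_anytime_lower_deviation_general P Y hmeas hindep hbdd μ hμ hmean δ hδ l N hN κ hκ f hf z
    hz
end

section
/- For every α ∈ (0,1), every μ ∈ (0,1), and every x ∈ [0, 1−μ], the Kullback–Leibler divergence satisfies D(μ + x, μ) ≤ c · D(μ + α·x, μ), where c = 1 / ( α + (1−α)·log(1−α) ). -/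
open Set Real

/-!
With Bennett's function `h(u) = (1 + u) log (1 + u) - u`, the divergence splits as
`D(μ + y, μ) = μ h(y / μ) + (1 - μ) h(-y / (1 - μ))`, and `1 / c = h(-α)`.
Both halves shrink by at most the factor `h(-α)` under `y ↦ α y`:
on `u ≥ 0` one has `h(α u) ≥ α² h(u) ≥ h(-α) h(u)` because `h' = log (1 + ·)` is concave and
vanishes at `0`; on `s ∈ [0, 1]` the difference `h(-α s) - h(-α) h(-s)` vanishes at both ends,
has zero slope at `0`, and is convex and then concave, hence is nonnegative.
-/

theorem monotoneOn_Icc_of_hasDerivAt_nonneg {f f' : ℝ → ℝ} {a b : ℝ}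
    (hf : ∀ x ∈ Icc a b, HasDerivAt f (f' x) x) (hf' : ∀ x ∈ Ioo a b, 0 ≤ f' x) :
    MonotoneOn f (Icc a b) :=
  monotoneOn_of_hasDerivWithinAt_nonneg (convex_Icc a b)
    (fun x hx => (hf x hx).continuousAt.continuousWithinAt)
    (fun x hx => (hf x (interior_subset hx)).hasDerivWithinAt)
    (fun x hx => hf' x (by rwa [interior_Icc] at hx))

theorem nonneg_of_deriv2_nonneg {f f' f'' : ℝ → ℝ} {a b : ℝ} (hab : a ≤ b)
    (hf : ∀ x ∈ Icc a b, HasDerivAt f (f' x) x) (hf' : ∀ x ∈ Icc a b, HasDerivAt f' (f'' x) x)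
    (hf'' : ∀ x ∈ Ioo a b, 0 ≤ f'' x) (ha : 0 ≤ f a) (ha' : 0 ≤ f' a) : 0 ≤ f b := by
  have hf'_nonneg : ∀ x ∈ Ioo a b, 0 ≤ f' x := fun x hx =>
    ha'.trans (monotoneOn_Icc_of_hasDerivAt_nonneg hf' hf'' (left_mem_Icc.2 hab)
      (Ioo_subset_Icc_self hx) hx.1.le)
  exact ha.trans (monotoneOn_Icc_of_hasDerivAt_nonneg hf hf'_nonneg (left_mem_Icc.2 hab)
    (right_mem_Icc.2 hab) hab)

theorem exists_nonneg_on_Ico_nonpos_on_Ioo {g : ℝ → ℝ} {a b : ℝ} (hab : a ≤ b)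
    (hg : ∀ x ∈ Ico a b, ∀ y ∈ Ico a b, x ≤ y → 0 ≤ g y → 0 ≤ g x) :
    ∃ c ∈ Icc a b, (∀ x ∈ Ico a c, 0 ≤ g x) ∧ ∀ x ∈ Ioo c b, g x ≤ 0 := by
  set S := insert a {x ∈ Ico a b | 0 ≤ g x}
  have hS : S ⊆ Icc a b := by
    rintro x (rfl | ⟨hx, -⟩)
    exacts [left_mem_Icc.2 hab, Ico_subset_Icc_self hx]
  have hbdd : BddAbove S := ⟨b, fun x hx => (hS hx).2⟩
  have haS : a ≤ sSup S := le_csSup hbdd (mem_insert a _)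
  refine ⟨sSup S, ⟨haS, csSup_le (insert_nonempty _ _) fun x hx => (hS hx).2⟩, ?_, ?_⟩
  · intro x hx
    obtain ⟨y, hyS, hxy⟩ := exists_lt_of_lt_csSup (insert_nonempty _ _) hx.2
    rcases hyS with rfl | ⟨hy, hgy⟩
    · exact absurd hx.1 (not_le.2 hxy)
    · exact hg x ⟨hx.1, hxy.trans hy.2⟩ y hy hxy.le hgy
  · intro x hx
    by_contra! hgx
    exact (le_csSup hbdd (Or.inr ⟨⟨haS.trans hx.1.le, hx.2⟩, hgx.le⟩)).not_gt hx.1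

/-- `hf''` says that `{f'' ≥ 0}` is an initial segment of `[a, b)`: `f` is convex, then concave. -/
theorem nonneg_of_deriv2_sign_change {f f' f'' : ℝ → ℝ} {a b : ℝ}
    (hf : ∀ x ∈ Ico a b, HasDerivAt f (f' x) x) (hf' : ∀ x ∈ Ico a b, HasDerivAt f' (f'' x) x)
    (hcont : ContinuousOn f (Icc a b))
    (hf'' : ∀ x ∈ Ico a b, ∀ y ∈ Ico a b, x ≤ y → 0 ≤ f'' y → 0 ≤ f'' x)
    (ha : 0 ≤ f a) (ha' : 0 ≤ f' a) (hb : 0 ≤ f b) : ∀ x ∈ Icc a b, 0 ≤ f x := by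
  intro x hx
  obtain ⟨c, hc, hconvex, hconcave⟩ := exists_nonneg_on_Ico_nonpos_on_Ioo (hx.1.trans hx.2) hf''
  have h_le_c : ∀ z ∈ Ico a b, z ≤ c → 0 ≤ f z := fun z hz hzc =>
    nonneg_of_deriv2_nonneg hz.1 (fun y hy => hf y ⟨hy.1, hy.2.trans_lt hz.2⟩)
      (fun y hy => hf' y ⟨hy.1, hy.2.trans_lt hz.2⟩)
      (fun y hy => hconvex y ⟨hy.1.le, hy.2.trans_le hzc⟩) ha ha'
  rcases hx.2.eq_or_lt with rfl | hxb
  · exact hb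
  rcases le_or_gt x c with hxc | hcx
  · exact h_le_c x ⟨hx.1, hxb⟩ hxc
  have hmem : ∀ y ∈ interior (Icc c b), y ∈ Ico a b := fun y hy => by
    rw [interior_Icc] at hy
    exact ⟨hc.1.trans hy.1.le, hy.2⟩
  have hconc : ConcaveOn ℝ (Icc c b) f :=
    concaveOn_of_hasDerivWithinAt2_nonpos (convex_Icc c b) (hcont.mono (Icc_subset_Icc_left hc.1))
      (fun y hy => (hf y (hmem y hy)).hasDerivWithinAt)
      (fun y hy => (hf' y (hmem y hy)).hasDerivWithinAt)
      (fun y hy => hconcave y (by rwa [interior_Icc] at hy))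
  exact (le_min (h_le_c c ⟨hc.1, hcx.trans hxb⟩ le_rfl) hb).trans
    (hconc.min_le_of_mem_Icc (left_mem_Icc.2 hc.2) (right_mem_Icc.2 hc.2) ⟨hcx.le, hx.2⟩)

noncomputable def bennett (u : ℝ) : ℝ := (1 + u) * log (1 + u) - u

@[simp] theorem bennett_zero : bennett 0 = 0 := by simp [bennett]

@[simp] theorem bennett_neg_one : bennett (-1) = 1 := by simp [bennett]

@[fun_prop] theorem continuous_bennett : Continuous bennett :=
  (continuous_mul_log.comp (continuous_const.add continuous_id)).sub continuous_id

theorem hasDerivAt_bennett {u : ℝ} (hu : -1 < u) : HasDerivAt bennett (log (1 + u)) u := by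
  have h1 : HasDerivAt (fun u : ℝ => 1 + u) 1 u := (hasDerivAt_id u).const_add 1
  have hpos : 1 + u ≠ 0 := by linarith
  refine ((h1.mul (h1.log hpos)).sub (hasDerivAt_id u)).congr_deriv ?_
  field_simp
  ring

theorem bennett_nonneg {u : ℝ} (hu : -1 ≤ u) : 0 ≤ bennett u := by
  have := self_sub_one_le_mul_log (x := 1 + u) (by linarith)
  unfold bennett
  linarith

theorem bennett_pos {u : ℝ} (hu : -1 ≤ u) (hu0 : u ≠ 0) : 0 < bennett u := by
  have := self_sub_one_lt_mul_log (x := 1 + u) (by linarith) (by simpa using hu0)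
  unfold bennett
  linarith

theorem bennett_le_sq {u : ℝ} (hu : -1 ≤ u) : bennett u ≤ u ^ 2 := by
  have hlog : (1 + u) * log (1 + u) ≤ (1 + u) * u := by
    rcases hu.eq_or_lt with rfl | hu
    · simp
    · have := log_le_sub_one_of_pos (x := 1 + u) (by linarith)
      exact mul_le_mul_of_nonneg_left (by linarith) (by linarith)
  unfold bennett
  nlinarith

theorem sq_mul_bennett_le_bennett_mul {a u : ℝ} (ha : a ∈ Icc (0 : ℝ) 1) (hu : 0 ≤ u) :
    a ^ 2 * bennett u ≤ bennett (a * u) := by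
  have hlog : ∀ v, 0 ≤ v → a * log (1 + v) ≤ log (1 + a * v) := fun v hv => by
    have := strictConcaveOn_log_Ioi.concaveOn.2 (show (1 : ℝ) ∈ Ioi 0 by norm_num)
      (show 1 + v ∈ Ioi 0 by simp only [mem_Ioi]; linarith) (sub_nonneg.2 ha.2) ha.1
      (sub_add_cancel 1 a)
    simp only [smul_eq_mul, log_one, mul_zero, zero_add] at this
    rwa [show (1 - a) * 1 + a * (1 + v) = 1 + a * v by ring] at this
  have hderiv : ∀ v ∈ Icc 0 u, HasDerivAt (fun v => bennett (a * v) - a ^ 2 * bennett v)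
      (log (1 + a * v) * a - a ^ 2 * log (1 + v)) v := fun v hv =>
    ((hasDerivAt_bennett (by nlinarith [hv.1, ha.1])).comp v (hasDerivAt_id' v |>.const_mul a
      |>.congr_deriv (mul_one a))).sub ((hasDerivAt_bennett (by linarith [hv.1])).const_mul _)
  have hmono := monotoneOn_Icc_of_hasDerivAt_nonneg hderiv fun v hv => by
    nlinarith [hlog v hv.1.le, ha.1]
  have := hmono (left_mem_Icc.2 hu) (right_mem_Icc.2 hu) hu
  simp only [mul_zero, bennett_zero] at this
  linarith

theorem bennett_neg_mul_bennett_neg_le {a s : ℝ} (ha : a ∈ Icc (0 : ℝ) 1) (hs : s ∈ Icc (0 : ℝ) 1) :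
    bennett (-a) * bennett (-s) ≤ bennett (-(a * s)) := by
  obtain ⟨ha0, ha1⟩ := ha
  set ψ := bennett (-a)
  have hψ : ψ ≤ a ^ 2 := by simpa using bennett_le_sq (u := -a) (by linarith)
  have hat : ∀ t ∈ Ico (0 : ℝ) 1, 0 < 1 - a * t := fun t ht => by nlinarith [ht.1, ht.2]
  have hf : ∀ t ∈ Ico (0 : ℝ) 1, HasDerivAt (fun t => bennett (-(a * t)) - ψ * bennett (-t))
      (ψ * log (1 - t) - a * log (1 - a * t)) t := fun t ht => by
    have h1 := (hasDerivAt_bennett (u := -(a * t)) (by linarith [hat t ht])).comp t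
      ((hasDerivAt_id' t).const_mul a).neg
    have h2 := ((hasDerivAt_bennett (u := -t) (by linarith [ht.2])).comp t
      (hasDerivAt_neg t)).const_mul ψ
    refine (h1.sub h2).congr_deriv ?_
    simp only [← sub_eq_add_neg]
    ring
  have hf' : ∀ t ∈ Ico (0 : ℝ) 1, HasDerivAt (fun t => ψ * log (1 - t) - a * log (1 - a * t))
      (a ^ 2 / (1 - a * t) - ψ / (1 - t)) t := fun t ht => by
    have h1 := (((hasDerivAt_id' t).const_sub 1).log (by linarith [ht.2])).const_mul ψ
    have h2 := ((((hasDerivAt_id' t).const_mul a).const_sub 1).log (hat t ht).ne').const_mul a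
    refine (h1.sub h2).congr_deriv ?_
    field_simp
    ring
  refine nonneg_of_deriv2_sign_change hf hf' (by fun_prop) ?_ (by simp) (by simp) (by simp [ψ]) s hs
    |> sub_nonneg.1
  -- `f'' t ≥ 0` iff `ψ (1 - a t) ≤ a² (1 - t)`, and `a² (1 - t) - ψ (1 - a t)` decreases
  -- in `t` because `ψ ≤ a`.
  intro x hx y hy hxy hfy
  have hx1 : 0 < 1 - x := by linarith [hx.2]
  have hy1 : 0 < 1 - y := by linarith [hy.2]
  rw [sub_nonneg, div_le_div_iff₀ hy1 (hat y hy)] at hfy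
  rw [sub_nonneg, div_le_div_iff₀ hx1 (hat x hx)]
  nlinarith [mul_nonneg (sub_nonneg.2 hxy) (mul_nonneg ha0 (by nlinarith : 0 ≤ a - ψ))]

theorem klBerR_add_eq_bennett {μ : ℝ} (hμ : μ ∈ Ioo (0 : ℝ) 1) (y : ℝ) :
    klBerR (μ + y) μ = μ * bennett (y / μ) + (1 - μ) * bennett (-(y / (1 - μ))) := by
  have hμ0 : μ ≠ 0 := hμ.1.ne'
  have hμ1 : 1 - μ ≠ 0 := by linarith [hμ.2]
  rw [klBerR, bennett, bennett, show 1 + y / μ = (μ + y) / μ by field_simp,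
    show 1 + -(y / (1 - μ)) = (1 - (μ + y)) / (1 - μ) by field_simp; ring]
  field_simp
  ring

theorem bennett_neg_mul_klBerR_le {α μ x : ℝ} (hα : α ∈ Icc (0 : ℝ) 1) (hμ : μ ∈ Ioo (0 : ℝ) 1)
    (hx : x ∈ Icc 0 (1 - μ)) :
    bennett (-α) * klBerR (μ + x) μ ≤ klBerR (μ + α * x) μ := by
  have h1μ : 0 < 1 - μ := by linarith [hμ.2]
  have hu : 0 ≤ x / μ := div_nonneg hx.1 hμ.1.le
  have hs : x / (1 - μ) ∈ Icc (0 : ℝ) 1 :=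
    ⟨div_nonneg hx.1 h1μ.le, (div_le_one h1μ).2 hx.2⟩
  have hψ : bennett (-α) ≤ α ^ 2 := by simpa using bennett_le_sq (u := -α) (by linarith [hα.2])
  have hright : bennett (-α) * bennett (x / μ) ≤ bennett (α * (x / μ)) :=
    (mul_le_mul_of_nonneg_right hψ (bennett_nonneg (by linarith))).trans
      (sq_mul_bennett_le_bennett_mul hα hu)
  have hleft := bennett_neg_mul_bennett_neg_le hα hs
  rw [klBerR_add_eq_bennett hμ, klBerR_add_eq_bennett hμ, mul_div_assoc, mul_div_assoc]
  linarith [mul_le_mul_of_nonneg_left hright hμ.1.le, mul_le_mul_of_nonneg_left hleft h1μ.le]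

/-- For every `α ∈ (0,1)`, `μ ∈ (0,1)` and `x ∈ [0, 1-μ]`:
`D(μ + x, μ) ≤ c · D(μ + α·x, μ)` with `c = 1/(α + (1-α)·log(1-α))`. -/
theorem kl_dilation_inequality
    (α μ x c : ℝ)
    (hα : α ∈ Set.Ioo (0:ℝ) 1) (hμ : μ ∈ Set.Ioo (0:ℝ) 1)
    (hx : x ∈ Set.Icc (0:ℝ) (1 - μ))
    (hc : c = 1 / (α + (1 - α) * Real.log (1 - α))) :
    klBerR (μ + x) μ ≤ c * klBerR (μ + α * x) μ := by
  have hψ : 0 < bennett (-α) := bennett_pos (by linarith [hα.2]) (neg_ne_zero.2 hα.1.ne')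
  have hc' : c = 1 / bennett (-α) := by
    rw [hc, bennett, ← sub_eq_add_neg, sub_neg_eq_add]
    ring
  rw [hc', one_div_mul_eq_div, le_div_iff₀ hψ, mul_comm]
  exact bennett_neg_mul_klBerR_le (Ioo_subset_Icc_self hα) hμ hx
end

section
/- For every α ∈ (0,1) with c = 1 / ( α + (1−α)·log(1−α) ), and every μ ∈ (0,1), the boundary inequality holds: log(1/μ) ≤ c · ( ((1−α)·μ + α) · log( 1 + α/((1−α)·μ) ) + log(1−α) ). -/
/-!
Multiplying by `K = α + (1 - α) log (1 - α) = klFun (1 - α) > 0`, the inequality says that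
`g μ = ((1 - α) μ + α) log (1 + α / ((1 - α) μ)) + log (1 - α) + K log μ` is nonnegative.
Now `g 1 = 0`, and `g' x = (1 - α) (log (1 + α / ((1 - α) x)) + log (1 - α) / x)` is nonpositive
on `(0, 1)` by Bernoulli's inequality `1 + s t ≤ (1 + s) ^ t` for `t = 1 / x ≥ 1`,
`s = α / (1 - α)`; so `g` decreases on `(0, 1]` to `0`.
-/

open Set Real InformationTheory

lemma log_one_add_mul_le_mul_log_one_add {s t : ℝ} (hs : 0 ≤ s) (ht : 1 ≤ t) :
    log (1 + s * t) ≤ t * log (1 + s) := by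
  rw [← log_rpow (by linarith)]
  refine log_le_log (by nlinarith) ?_
  simpa [mul_comm] using one_add_mul_self_le_rpow_one_add (by linarith : -1 ≤ s) ht

lemma klFun_pos {x : ℝ} (hx : 0 ≤ x) (hx1 : x ≠ 1) : 0 < klFun x :=
  (klFun_nonneg hx).lt_of_ne' fun h => hx1 ((klFun_eq_zero_iff hx).1 h)

noncomputable def boundaryGap (α x : ℝ) : ℝ :=
  ((1 - α) * x + α) * log (1 + α / ((1 - α) * x)) + log (1 - α) + klFun (1 - α) * log x

lemma boundaryGap_one (α : ℝ) (hα : α ≠ 1) : boundaryGap α 1 = 0 := by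
  have : 1 - α ≠ 0 := sub_ne_zero.2 hα.symm
  rw [boundaryGap, show 1 + α / ((1 - α) * 1) = (1 - α)⁻¹ by field_simp; ring, log_inv]
  simp

lemma hasDerivAt_boundaryGap {α x : ℝ} (hα : α ∈ Ioo 0 1) (hx : 0 < x) :
    HasDerivAt (boundaryGap α)
      ((1 - α) * log (1 + α / ((1 - α) * x)) + (1 - α) * log (1 - α) / x) x := by
  obtain ⟨hα0, hα1⟩ := hα
  have hβ : 0 < 1 - α := by linarith
  have hlin : HasDerivAt (fun y => (1 - α) * y + α) (1 - α) x := by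
    simpa using ((hasDerivAt_id x).const_mul (1 - α)).add_const α
  have hden : HasDerivAt (fun y => (1 - α) * y) (1 - α) x := by
    simpa using (hasDerivAt_id x).const_mul (1 - α)
  have hquot : HasDerivAt (fun y => 1 + α / ((1 - α) * y)) (-(α * (1 - α)) / ((1 - α) * x) ^ 2) x := by
    simpa using ((hasDerivAt_const x α).fun_div hden (by positivity)).const_add 1
  have hlog := hquot.log (by positivity)
  have := ((hlin.mul hlog).add_const (log (1 - α))).add
    ((hasDerivAt_log hx.ne').const_mul (klFun (1 - α)))
  refine this.congr_deriv ?_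
  rw [klFun_apply]
  field_simp
  ring

lemma boundaryGap_deriv_nonpos {α x : ℝ} (hα : α ∈ Ioo 0 1) (hx : x ∈ Ioo 0 1) :
    (1 - α) * log (1 + α / ((1 - α) * x)) + (1 - α) * log (1 - α) / x ≤ 0 := by
  obtain ⟨hα0, hα1⟩ := hα
  obtain ⟨hx0, hx1⟩ := hx
  have hβ : 0 < 1 - α := by linarith
  have hbern : log (1 + α / (1 - α) * x⁻¹) ≤ x⁻¹ * log (1 + α / (1 - α)) :=
    log_one_add_mul_le_mul_log_one_add (by positivity) (one_le_inv₀ hx0 |>.2 hx1.le)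
  rw [show 1 + α / (1 - α) = (1 - α)⁻¹ by field_simp; ring, log_inv] at hbern
  calc (1 - α) * log (1 + α / ((1 - α) * x)) + (1 - α) * log (1 - α) / x
      = (1 - α) * log (1 + α / (1 - α) * x⁻¹) + (1 - α) * log (1 - α) / x := by
        rw [div_mul_eq_div_div, div_eq_mul_inv (α / (1 - α))]
    _ ≤ (1 - α) * (x⁻¹ * -log (1 - α)) + (1 - α) * log (1 - α) / x := by gcongr
    _ = 0 := by ring

lemma boundaryGap_antitoneOn {α : ℝ} (hα : α ∈ Ioo 0 1) : AntitoneOn (boundaryGap α) (Ioc 0 1) := by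
  refine antitoneOn_of_hasDerivWithinAt_nonpos (convex_Ioc 0 1)
    (f' := fun x => (1 - α) * log (1 + α / ((1 - α) * x)) + (1 - α) * log (1 - α) / x)
    (fun x hx => (hasDerivAt_boundaryGap hα hx.1).continuousAt.continuousWithinAt) ?_ ?_
  all_goals rw [interior_Ioc]
  · exact fun x hx => (hasDerivAt_boundaryGap hα hx.1).hasDerivWithinAt
  · exact fun x hx => boundaryGap_deriv_nonpos hα hx

/-- The boundary inequality: for `α ∈ (0,1)` with `c = 1/(α + (1-α)·log(1-α))`
and every `μ ∈ (0,1)`,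
`log(1/μ) ≤ c·( ((1-α)·μ + α)·log(1 + α/((1-α)·μ)) + log(1-α) )`. -/
theorem kl_boundary_inequality
    (α μ c : ℝ)
    (hα : α ∈ Set.Ioo (0:ℝ) 1) (hμ : μ ∈ Set.Ioo (0:ℝ) 1)
    (hc : c = 1 / (α + (1 - α) * Real.log (1 - α))) :
    Real.log (1 / μ) ≤
      c * (((1 - α) * μ + α) * Real.log (1 + α / ((1 - α) * μ)) + Real.log (1 - α)) := by
  have hK : α + (1 - α) * log (1 - α) = klFun (1 - α) := by rw [klFun_apply]; ring
  have hKpos : 0 < klFun (1 - α) := klFun_pos (by linarith [hα.2]) (by linarith [hα.1])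
  have hgap : 0 ≤ boundaryGap α μ := by
    rw [← boundaryGap_one α hα.2.ne]
    exact boundaryGap_antitoneOn hα ⟨hμ.1, hμ.2.le⟩ ⟨one_pos, le_rfl⟩ hμ.2.le
  rw [hc, hK, one_div_mul_eq_div, le_div_iff₀ hKpos, one_div, log_inv]
  rw [boundaryGap] at hgap
  linarith
end

section
/- For 0 < x < y < 1 there exists a unique z* ∈ (x, y) such that D(z*, x) = D(z*, y); moreover the Chernoff information satisfies D*(x,y) = D(z*, x) = D(z*, y), and D*(x,y) = max_{z ∈ [x,y]} min{D(z,x), D(z,y)}. -/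
open Set

/-- Chernoff information between Bernoulli(x) and Bernoulli(y) for `0 < x < y < 1`. -/
noncomputable def chernoffR (x y : ℝ) : ℝ :=
  ⨅ z : Set.Ioo (0:ℝ) 1, max (klBerR z x) (klBerR z y)

/-!
`D(·, q)` is strictly decreasing on `(0, q]` and strictly increasing on `[q, 1)`
(its derivative is `log (z / q) - log ((1 - z) / (1 - q))`). Hence `D(·, x) - D(·, y)` is strictly
increasing on `[x, y]`, going from `-D(x, y) < 0` to `D(y, x) > 0`, and has a unique zero `z*`.
To the right of `z*` the curve `D(·, x)` is above `D(z*, x)`, to its left `D(·, y)` is above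
`D(z*, y) = D(z*, x)`; so `max {D(z, x), D(z, y)}` is minimised and `min {D(z, x), D(z, y)}`
maximised at `z*`.
-/

section Crossing

variable {ι β : Type*} [LinearOrder ι] [ConditionallyCompleteLinearOrder β]
  {s : Set ι} {f g : ι → β} {z : ι}

theorem iInf_max_eq_of_crossing (hz : z ∈ s) (hf : ∀ w ∈ s, z ≤ w → f z ≤ f w)
    (hg : ∀ w ∈ s, w ≤ z → g z ≤ g w) (hfg : f z = g z) :
    ⨅ w : s, max (f w) (g w) = f z := by
  refine IsLeast.csInf_eq ⟨⟨⟨z, hz⟩, by simp [hfg]⟩, ?_⟩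
  rintro _ ⟨⟨w, hw⟩, rfl⟩
  rcases le_total z w with hzw | hwz
  · exact (hf w hw hzw).trans (le_max_left _ _)
  · exact hfg ▸ (hg w hw hwz).trans (le_max_right _ _)

theorem iSup_min_eq_of_crossing (hz : z ∈ s) (hf : ∀ w ∈ s, w ≤ z → f w ≤ f z)
    (hg : ∀ w ∈ s, z ≤ w → g w ≤ g z) (hfg : f z = g z) :
    ⨆ w : s, min (f w) (g w) = f z :=
  iInf_max_eq_of_crossing (ι := ιᵒᵈ) (β := βᵒᵈ) hz hf hg hfg

end Crossing

theorem klBerR_self_s12 {p : ℝ} (hp0 : p ≠ 0) (hp1 : p ≠ 1) : klBerR p p = 0 := by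
  simp [klBerR, div_self hp0, div_self (sub_ne_zero.2 hp1.symm)]

theorem hasDerivAt_klBerR {q z : ℝ} (hq0 : q ≠ 0) (hq1 : q ≠ 1) (hz0 : z ≠ 0)
    (hz1 : z ≠ 1) :
    HasDerivAt (fun t => klBerR t q) (Real.log (z / q) - Real.log ((1 - z) / (1 - q))) z := by
  have hq1' : 1 - q ≠ 0 := sub_ne_zero.2 hq1.symm
  have hz1' : 1 - z ≠ 0 := sub_ne_zero.2 hz1.symm
  have hlog₁ : HasDerivAt (fun t => Real.log (t / q)) (1 / q / (z / q)) z :=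
    ((hasDerivAt_id z).div_const q).log (div_ne_zero hz0 hq0)
  have hlog₂ : HasDerivAt (fun t => Real.log ((1 - t) / (1 - q)))
      (-1 / (1 - q) / ((1 - z) / (1 - q))) z :=
    (((hasDerivAt_id z).const_sub 1).div_const (1 - q)).log (div_ne_zero hz1' hq1')
  refine (((hasDerivAt_id z).mul hlog₁).add
    (((hasDerivAt_id z).const_sub 1).mul hlog₂)).congr_deriv ?_
  simp only [id_eq]
  field_simp
  ring

theorem klBerR_strictMonoOn {q : ℝ} (hq0 : 0 < q) (hq1 : q < 1) :
    StrictMonoOn (fun z => klBerR z q) (Ico q 1) := by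
  refine strictMonoOn_of_deriv_pos (convex_Ico q 1) (fun z hz => ?_) (fun z hz => ?_)
  · exact (hasDerivAt_klBerR hq0.ne' hq1.ne (hq0.trans_le hz.1).ne' hz.2.ne).continuousAt
      |>.continuousWithinAt
  rw [interior_Ico] at hz
  rw [(hasDerivAt_klBerR hq0.ne' hq1.ne (hq0.trans hz.1).ne' hz.2.ne).deriv]
  have hpos : 0 < Real.log (z / q) := Real.log_pos ((one_lt_div hq0).2 hz.1)
  have hneg : Real.log ((1 - z) / (1 - q)) < 0 :=
    Real.log_neg (div_pos (by linarith [hz.2]) (by linarith))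
      ((div_lt_one (by linarith)).2 (by linarith [hz.1]))
  linarith

theorem klBerR_strictAntiOn {q : ℝ} (hq0 : 0 < q) (hq1 : q < 1) :
    StrictAntiOn (fun z => klBerR z q) (Ioc 0 q) := by
  refine strictAntiOn_of_deriv_neg (convex_Ioc 0 q) (fun z hz => ?_) (fun z hz => ?_)
  · exact (hasDerivAt_klBerR hq0.ne' hq1.ne hz.1.ne' (hz.2.trans_lt hq1).ne).continuousAt
      |>.continuousWithinAt
  rw [interior_Ioc] at hz
  rw [(hasDerivAt_klBerR hq0.ne' hq1.ne hz.1.ne' (hz.2.trans hq1).ne).deriv]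
  have hneg : Real.log (z / q) < 0 := Real.log_neg (div_pos hz.1 hq0) ((div_lt_one hq0).2 hz.2)
  have hpos : 0 < Real.log ((1 - z) / (1 - q)) :=
    Real.log_pos ((one_lt_div (by linarith)).2 (by linarith [hz.2]))
  linarith

theorem existsUnique_klBerR_eq {x y : ℝ} (hx : 0 < x) (hxy : x < y) (hy : y < 1) :
    ∃! z, z ∈ Ioo x y ∧ klBerR z x = klBerR z y := by
  have hy0 : 0 < y := hx.trans hxy
  have hx1 : x < 1 := hxy.trans hy
  have hmono : StrictMonoOn (fun t => klBerR t x - klBerR t y) (Icc x y) := fun a ha b hb hab =>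
    sub_lt_sub
      (klBerR_strictMonoOn hx hx1 ⟨ha.1, ha.2.trans_lt hy⟩ ⟨hb.1, hb.2.trans_lt hy⟩ hab)
      (klBerR_strictAntiOn hy0 hy ⟨hx.trans_le ha.1, ha.2⟩ ⟨hx.trans_le hb.1, hb.2⟩ hab)
  have hcont : ContinuousOn (fun t => klBerR t x - klBerR t y) (Icc x y) := fun t ht =>
    have ht0 : t ≠ 0 := (hx.trans_le ht.1).ne'
    have ht1 : t ≠ 1 := (ht.2.trans_lt hy).ne
    ((hasDerivAt_klBerR hx.ne' hx1.ne ht0 ht1).continuousAt.sub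
      (hasDerivAt_klBerR hy0.ne' hy.ne ht0 ht1).continuousAt).continuousWithinAt
  have hxy_pos : 0 < klBerR x y := klBerR_self_s12 hy0.ne' hy.ne ▸
    klBerR_strictAntiOn hy0 hy ⟨hx, hxy.le⟩ ⟨hy0, le_rfl⟩ hxy
  have hyx_pos : 0 < klBerR y x := klBerR_self_s12 hx.ne' hx1.ne ▸
    klBerR_strictMonoOn hx hx1 ⟨le_rfl, hx1⟩ ⟨hxy.le, hy⟩ hxy
  have hsign : (0 : ℝ) ∈ Ioo (klBerR x x - klBerR x y) (klBerR y x - klBerR y y) := by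
    rw [klBerR_self_s12 hx.ne' hx1.ne, klBerR_self_s12 hy0.ne' hy.ne]
    exact ⟨by linarith, by linarith⟩
  obtain ⟨z, hz, hz0⟩ := intermediate_value_Ioo hxy.le hcont hsign
  refine ⟨z, ⟨hz, sub_eq_zero.1 hz0⟩, fun w ⟨hw, hweq⟩ => ?_⟩
  exact hmono.injOn (Ioo_subset_Icc_self hw) (Ioo_subset_Icc_self hz)
    ((sub_eq_zero.2 hweq).trans hz0.symm)

/-- For `0 < x < y < 1` there is a unique `z* ∈ (x,y)` with `D(z*,x) = D(z*,y)`;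
moreover `D*(x,y) = D(z*,x) = D(z*,y)` and
`D*(x,y) = max_{z ∈ [x,y]} min{D(z,x), D(z,y)}`. -/
theorem chernoff_crossing_point
    (x y : ℝ) (hx : 0 < x) (hxy : x < y) (hy : y < 1) :
    ∃ z : ℝ, z ∈ Set.Ioo x y ∧ klBerR z x = klBerR z y ∧
      (∀ w ∈ Set.Ioo x y, klBerR w x = klBerR w y → w = z) ∧
      chernoffR x y = klBerR z x ∧ chernoffR x y = klBerR z y ∧
      chernoffR x y = ⨆ w : Set.Icc x y, min (klBerR w x) (klBerR w y) := by
  obtain ⟨z, ⟨hz, hcross⟩, huniq⟩ := existsUnique_klBerR_eq hx hxy hy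
  have hmono := (klBerR_strictMonoOn hx (hxy.trans hy)).monotoneOn
  have hanti := (klBerR_strictAntiOn (hx.trans hxy) hy).antitoneOn
  have hinf : chernoffR x y = klBerR z x :=
    iInf_max_eq_of_crossing (f := fun t => klBerR t x) (g := fun t => klBerR t y)
      ⟨hx.trans hz.1, hz.2.trans hy⟩
      (fun w hw hzw => hmono ⟨hz.1.le, hz.2.trans hy⟩ ⟨hz.1.le.trans hzw, hw.2⟩ hzw)
      (fun w hw hwz => hanti ⟨hw.1, hwz.trans hz.2.le⟩ ⟨hw.1.trans_le hwz, hz.2.le⟩ hwz)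
      hcross
  have hsup : ⨆ w : Icc x y, min (klBerR w x) (klBerR w y) = klBerR z x :=
    iSup_min_eq_of_crossing (f := fun t => klBerR t x) (g := fun t => klBerR t y)
      (Ioo_subset_Icc_self hz)
      (fun w hw hwz => hmono ⟨hw.1, hw.2.trans_lt hy⟩ ⟨hz.1.le, hz.2.trans hy⟩ hwz)
      (fun w hw hzw => hanti ⟨hx.trans hz.1, hz.2.le⟩ ⟨hx.trans_le hw.1, hw.2⟩ hzw)
      hcross
  exact ⟨z, hz, hcross, fun w hw hweq => huniq w ⟨hw, hweq⟩, hinf, hinf.trans hcross,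
    hinf.trans hsup.symm⟩
end

section
/- The random confidence level Δ := sup{ ε ∈ (0,1) : U_t(ε) ≥ μ for all t ∈ ℕ } (with sup ∅ = 0) satisfies P( Δ < γ ) ≤ γ for every γ ∈ (0,1); consequently, for any μ̃ ∈ (μ,1) and z ≥ 0, P( log(1/Δ) / D*(μ, μ̃) ≥ z ) ≤ exp( −D*(μ, μ̃)·z ). -/
/-!
Fix `γ`. If `Δ < γ`, some bound `U_t(γ)` lies below `μ`, i.e. `μ̂_t < μ` and
`D(μ̂_t, μ) > f_t(γ)`. For a fixed level `d`, the event
`{∃ t ≥ T, μ̂_t < μ ∧ D(μ̂_t, μ) > d}` has probability at most `exp (-T d)`: take `z < μ`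
with `D(z, μ) = d` and the optimal Chernoff exponent `θ < 0`; the normalised products
`∏ exp (θ Yᵢ) / E[exp (θ Yᵢ)]` form a nonnegative martingale of mean one which exceeds
`exp (t d)` on that event, so Ville's maximal inequality applies. The times `t < N` are
handled one at a time, and the times `t ≥ N = 2 ^ l` are cut into `N` slices per dyadic
scale, on each of which `f_t(γ)` is bounded below by a constant; the constant `c(N)` absorbs
the factor `2 ^ (1 / N)` lost on a slice. The union bound then gives
`P(Δ < γ) ≤ (γ / κ(γ)) ^ ((N + 1) / N) · A = γ`, where `A` is the sum inside `κ`.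
The tail bound follows from `{log (1 / Δ) / D ≥ z} ⊆ {Δ ≤ exp (-D z)}`.
-/

open MeasureTheory ProbabilityTheory Set

/-- KL divergence between Bernoulli(p) and Bernoulli(q), with the convention
`D(p,q) = ⊤` when `q ∈ {0,1}` and `p ≠ q`. -/
noncomputable def klBer (p q : ℝ) : EReal :=
  if (q = 0 ∨ q = 1) ∧ p ≠ q then ⊤ else ((klBerR p q : ℝ) : EReal)

open Real

lemma mul_log_div_eq_sub (p : ℝ) {q : ℝ} (hq : q ≠ 0) :
    p * log (p / q) = p * log p - p * log q := by
  rcases eq_or_ne p 0 with rfl | hp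
  · simp
  · rw [log_div hp hq]; ring

lemma klBerR_eq_neg_binEntropy {μ : ℝ} (hμ₀ : μ ≠ 0) (hμ₁ : 1 - μ ≠ 0) (p : ℝ) :
    klBerR p μ = -binEntropy p - p * log μ - (1 - p) * log (1 - μ) := by
  rw [klBerR, mul_log_div_eq_sub p hμ₀, mul_log_div_eq_sub (1 - p) hμ₁, binEntropy, log_inv,
    log_inv]
  ring

lemma klBerR_self_s14 (μ : ℝ) : klBerR μ μ = 0 := by
  simp [klBerR]

section KLLeft

variable {μ : ℝ}

lemma continuous_klBerR_left (hμ : μ ∈ Ioo 0 1) : Continuous (klBerR · μ) := by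
  simp_rw [klBerR_eq_neg_binEntropy hμ.1.ne' (sub_ne_zero.2 hμ.2.ne')]
  fun_prop

lemma strictAntiOn_klBerR_left (hμ : μ ∈ Ioo 0 1) : StrictAntiOn (klBerR · μ) (Icc 0 μ) := by
  simp_rw [klBerR_eq_neg_binEntropy hμ.1.ne' (sub_ne_zero.2 hμ.2.ne')]
  refine strictAntiOn_of_deriv_neg (convex_Icc 0 μ) (by fun_prop) fun p hp => ?_
  rw [interior_Icc] at hp
  obtain ⟨hp₀, hpμ⟩ := hp
  have hderiv : HasDerivAt (fun x => -binEntropy x - x * log μ - (1 - x) * log (1 - μ))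
      (log p - log (1 - p) - log μ + log (1 - μ)) p :=
    ((((hasDerivAt_binEntropy hp₀.ne' (by linarith [hμ.2])).neg).sub
      ((hasDerivAt_id p).mul_const (log μ))).sub
      (((hasDerivAt_id p).const_sub 1).mul_const (log (1 - μ)))).congr_deriv (by ring)
  rw [hderiv.deriv]
  have h₁ : log p < log μ := log_lt_log hp₀ hpμ
  have h₂ : log (1 - μ) < log (1 - p) := log_lt_log (by linarith [hμ.2]) (by linarith)
  linarith

lemma klBerR_le_klBerR_zero (hμ : μ ∈ Ioo 0 1) {p : ℝ} (hp : p ∈ Icc 0 μ) :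
    klBerR p μ ≤ klBerR 0 μ :=
  (strictAntiOn_klBerR_left hμ).antitoneOn (left_mem_Icc.2 hμ.1.le) hp hp.1

lemma exists_klBerR_eq (hμ : μ ∈ Ioo 0 1) {d : ℝ} (hd₀ : 0 < d) (hd : d < klBerR 0 μ) :
    ∃ z ∈ Ioo 0 μ, klBerR z μ = d :=
  intermediate_value_Ioo' hμ.1.le (continuous_klBerR_left hμ).continuousOn
    ⟨by rwa [klBerR_self_s14], hd⟩

/-- The optimal exponent in the Chernoff bound: `θ = log (z (1 - μ) / (μ (1 - z)))`. -/
lemma exists_klBerR_eq_sub_log (hμ : μ ∈ Ioo 0 1) {z : ℝ} (hz : z ∈ Ioo 0 μ) :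
    ∃ θ < 0, klBerR z μ = θ * z - log (1 - μ + μ * exp θ) := by
  obtain ⟨hz₀, hzμ⟩ := hz
  obtain ⟨hμ₀, hμ₁⟩ := hμ
  have h₁z : 0 < 1 - z := by linarith
  have h₁μ : 0 < 1 - μ := by linarith
  have hratio : 0 < z * (1 - μ) / (μ * (1 - z)) := by positivity
  refine ⟨log (z * (1 - μ) / (μ * (1 - z))), log_neg hratio ?_, ?_⟩
  · rw [div_lt_one (by positivity)]
    nlinarith
  · have hsum : 1 - μ + μ * exp (log (z * (1 - μ) / (μ * (1 - z)))) = (1 - μ) / (1 - z) := by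
      rw [exp_log hratio]; field_simp; ring
    rw [hsum, klBerR, log_div hz₀.ne' hμ₀.ne', log_div h₁z.ne' h₁μ.ne', log_div h₁μ.ne' h₁z.ne',
      log_div (by positivity) (by positivity), log_mul hz₀.ne' h₁μ.ne', log_mul hμ₀.ne' h₁z.ne']
    ring

end KLLeft

lemma exp_mul_le_one_sub_add_mul_exp (θ : ℝ) {y : ℝ} (hy : y ∈ Icc 0 1) :
    exp (θ * y) ≤ 1 - y + y * exp θ := by
  simpa [mul_comm] using
    convexOn_exp.2 (mem_univ 0) (mem_univ θ) (sub_nonneg.2 hy.2) hy.1 (by ring)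

section Ville

variable {Ω : Type*} [MeasurableSpace Ω] {P : Measure Ω} {X : ℕ → Ω → ℝ}

lemma indep_natural_comap_succ (hX : ∀ i, Measurable (X i)) (hind : iIndepFun X P) (n : ℕ) :
    Indep (Filtration.natural X (fun i => (hX i).stronglyMeasurable) n)
      (MeasurableSpace.comap (X (n + 1)) inferInstance) P := by
  have h := indep_iSup_of_disjoint (fun i => (hX i).comap_le)
    ((iIndepFun_iff_iIndep _ _ _).1 hind) (S := Iic n) (T := {n + 1}) (by simp)
  simp only [iSup_singleton] at h
  exact h

lemma martingale_prod_range_succ [IsFiniteMeasure P] (hX : ∀ i, Measurable (X i))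
    (hind : iIndepFun X P) (hint : ∀ i, Integrable (X i) P)
    (hone : ∀ i, ∫ ω, X i ω ∂P = 1) :
    Martingale (fun n ω => ∏ i ∈ Finset.range (n + 1), X i ω)
      (Filtration.natural X (fun i => (hX i).stronglyMeasurable)) P := by
  set ℱ := Filtration.natural X (fun i => (hX i).stronglyMeasurable)
  set W : ℕ → Ω → ℝ := fun n ω => ∏ i ∈ Finset.range (n + 1), X i ω
  have hW_succ : ∀ n, W (n + 1) = W n * X (n + 1) := fun n => by
    ext ω; exact Finset.prod_range_succ _ _
  have hW_meas : ∀ n, Measurable[ℱ n] (W n) := fun n =>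
    Finset.measurable_prod _ fun i hi =>
      ((Filtration.stronglyAdapted_natural _ i).mono
        (ℱ.mono (Nat.lt_succ_iff.1 (Finset.mem_range.1 hi)))).measurable
  have hindep : ∀ n {g : Ω → ℝ}, Measurable[ℱ n] g → IndepFun g (X (n + 1)) P := fun n g hg =>
    (IndepFun_iff_Indep _ _ _).2
      (indep_of_indep_of_le_left (indep_natural_comap_succ hX hind n) hg.comap_le)
  have hW_int : ∀ n, Integrable (W n) P := by
    intro n
    induction n with
    | zero => simpa [W] using hint 0
    | succ n ih => rw [hW_succ]; exact (hindep n (hW_meas n)).integrable_mul ih (hint _)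
  refine martingale_of_setIntegral_eq_succ (fun n => (hW_meas n).stronglyMeasurable) hW_int
    fun n s hs => ?_
  have hs' : MeasurableSet s := ℱ.le n s hs
  have hind_s := hindep n ((hW_meas n).indicator hs)
  rw [hW_succ, ← integral_indicator hs', ← integral_indicator hs']
  calc ∫ ω, s.indicator (W n) ω ∂P
      = (∫ ω, s.indicator (W n) ω ∂P) * ∫ ω, X (n + 1) ω ∂P := by rw [hone, mul_one]
    _ = ∫ ω, s.indicator (W n) ω * X (n + 1) ω ∂P :=
      (hind_s.integral_fun_mul_eq_mul_integral
        ((hW_int n).indicator hs').aestronglyMeasurable (hint _).aestronglyMeasurable).symm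
    _ = ∫ ω, s.indicator (W n * X (n + 1)) ω ∂P := by
      congr 1; ext ω; by_cases hω : ω ∈ s <;> simp [hω]

theorem measure_exists_le_prod_le [IsFiniteMeasure P] (hX : ∀ i, Measurable (X i))
    (hind : iIndepFun X P) (hnn : ∀ i ω, 0 ≤ X i ω) (hint : ∀ i, Integrable (X i) P)
    (hone : ∀ i, ∫ ω, X i ω ∂P = 1) {a : ℝ} (ha : 0 < a) :
    P {ω | ∃ n, a ≤ ∏ i ∈ Finset.range (n + 1), X i ω} ≤ ENNReal.ofReal a⁻¹ := by
  have hmart := martingale_prod_range_succ hX hind hint hone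
  set W : ℕ → Ω → ℝ := fun n ω => ∏ i ∈ Finset.range (n + 1), X i ω
  have hW_nn : 0 ≤ W := fun n ω => Finset.prod_nonneg fun i _ => hnn i ω
  have hW_int : ∀ n, ∫ ω, W n ω ∂P = 1 := fun n => by
    rw [← setIntegral_univ, ← hmart.setIntegral_eq (Nat.zero_le n) MeasurableSet.univ,
      setIntegral_univ]
    simpa [W] using hone 0
  have hmono : Monotone fun n => {ω | ∃ k ≤ n, a ≤ W k ω} :=
    fun m n hmn ω ⟨k, hk, hak⟩ => ⟨k, hk.trans hmn, hak⟩
  have hfinite : ∀ n, P {ω | ∃ k ≤ n, a ≤ W k ω} ≤ ENNReal.ofReal a⁻¹ := by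
    intro n
    have hmax := maximal_ineq hmart.submartingale hW_nn (ε := a.toNNReal) n
    rw [Real.coe_toNNReal _ ha.le] at hmax
    calc P {ω | ∃ k ≤ n, a ≤ W k ω}
        ≤ P {ω | a ≤ (Finset.range (n + 1)).sup' Finset.nonempty_range_add_one
            fun k => W k ω} := measure_mono fun ω ⟨k, hk, hak⟩ =>
          show a ≤ _ from
            (Finset.le_sup'_iff _).2 ⟨k, Finset.mem_range.2 (Nat.lt_succ_of_le hk), hak⟩
      _ ≤ ENNReal.ofReal a⁻¹ := by
          rw [ENNReal.ofReal_inv_of_pos ha, ENNReal.le_inv_iff_mul_le, mul_comm]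
          refine hmax.trans ?_
          rw [← ENNReal.ofReal_one, ← hW_int n]
          exact ENNReal.ofReal_le_ofReal
            (setIntegral_le_integral (hmart.integrable n) (ae_of_all _ (hW_nn n)))
  have hunion : {ω | ∃ n, a ≤ W n ω} = ⋃ n, {ω | ∃ k ≤ n, a ≤ W k ω} := by
    ext ω; simp only [mem_ofPred_eq, mem_iUnion]
    exact ⟨fun ⟨n, h⟩ => ⟨n, n, le_rfl, h⟩, fun ⟨_, k, _, h⟩ => ⟨k, h⟩⟩
  rw [hunion, hmono.measure_iUnion]
  exact iSup_le hfinite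

end Ville

lemma exp_mul_le_prod_exp_mul_div {θ z B : ℝ} (hθ : θ ≤ 0) (hB : 0 < B) {t : ℕ} {y M : ℕ → ℝ}
    (hM : ∀ i, 0 < M i) (hMB : ∀ i, M i ≤ B) (hy : ∑ i ∈ Finset.range t, y i ≤ t * z) :
    exp (t * (θ * z - log B)) ≤ ∏ i ∈ Finset.range t, exp (θ * y i) / M i := by
  have hprod : ∏ i ∈ Finset.range t, M i ≤ B ^ t :=
    (Finset.prod_le_prod (fun i _ => (hM i).le) fun i _ => hMB i).trans_eq (by simp)
  have hpow : exp (t * log B) = B ^ t := by rw [exp_nat_mul, exp_log hB]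
  rw [Finset.prod_div_distrib, ← exp_sum, ← Finset.mul_sum, mul_sub, exp_sub, hpow]
  refine div_le_div₀ (exp_pos _).le (exp_le_exp.2 ?_) (Finset.prod_pos fun i _ => hM i) hprod
  nlinarith [mul_le_mul_of_nonpos_left hy hθ]

section Chernoff

variable {Ω : Type*} {Y : ℕ → Ω → ℝ} {μ : ℝ}

noncomputable def empMean (Y : ℕ → Ω → ℝ) (t : ℕ) (ω : Ω) : ℝ :=
  (∑ j ∈ Finset.range t, Y j ω) / t

/-- `μ` lies above the KL upper confidence bound of radius `r` at time `t`. -/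
def KLExceeds (Y : ℕ → Ω → ℝ) (μ r : ℝ) (t : ℕ) (ω : Ω) : Prop :=
  empMean Y t ω < μ ∧ r < klBerR (empMean Y t ω) μ

lemma empMean_nonneg (hbdd : ∀ i ω, Y i ω ∈ Icc (0 : ℝ) 1) (t : ℕ) (ω : Ω) :
    0 ≤ empMean Y t ω :=
  div_nonneg (Finset.sum_nonneg fun j _ => (hbdd j ω).1) t.cast_nonneg

variable [MeasurableSpace Ω] {P : Measure Ω}

lemma integrable_exp_mul [IsFiniteMeasure P] {Z : Ω → ℝ} (hZ : Measurable Z)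
    (hbdd : ∀ ω, Z ω ∈ Icc (0 : ℝ) 1) (θ : ℝ) : Integrable (fun ω => exp (θ * Z ω)) P := by
  refine Integrable.of_bound (by fun_prop) (exp |θ|) (ae_of_all _ fun ω => ?_)
  rw [norm_of_nonneg (exp_pos _).le, exp_le_exp]
  calc θ * Z ω ≤ |θ| * Z ω := mul_le_mul_of_nonneg_right (le_abs_self θ) (hbdd ω).1
    _ ≤ |θ| := mul_le_of_le_one_right (abs_nonneg θ) (hbdd ω).2

lemma integral_exp_mul_le [IsProbabilityMeasure P] {Z : Ω → ℝ} (hZ : Measurable Z)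
    (hbdd : ∀ ω, Z ω ∈ Icc (0 : ℝ) 1) (hmean : ∫ ω, Z ω ∂P = μ) (θ : ℝ) :
    ∫ ω, exp (θ * Z ω) ∂P ≤ 1 - μ + μ * exp θ := by
  have hZint : Integrable Z P := Integrable.of_bound hZ.aestronglyMeasurable 1
    (ae_of_all _ fun ω => by rw [norm_of_nonneg (hbdd ω).1]; exact (hbdd ω).2)
  have h₁Z : Integrable (fun ω => 1 - Z ω) P := (integrable_const 1).sub hZint
  calc ∫ ω, exp (θ * Z ω) ∂P ≤ ∫ ω, (1 - Z ω + Z ω * exp θ) ∂P :=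
        integral_mono_of_nonneg (ae_of_all _ fun ω => (exp_pos _).le)
          (h₁Z.add (hZint.mul_const _))
          (ae_of_all _ fun ω => exp_mul_le_one_sub_add_mul_exp θ (hbdd ω))
    _ = 1 - μ + μ * exp θ := by
        rw [integral_add h₁Z (hZint.mul_const _),
          integral_sub (integrable_const 1) hZint, integral_mul_const, hmean]
        simp

theorem measure_exists_empMean_le_le [IsProbabilityMeasure P] (hmeas : ∀ i, Measurable (Y i))
    (hindep : iIndepFun Y P) (hbdd : ∀ i ω, Y i ω ∈ Icc (0 : ℝ) 1) (hμ : μ ∈ Ioo 0 1)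
    (hmean : ∀ i, ∫ ω, Y i ω ∂P = μ) {z : ℝ} (hz : z ∈ Ioo 0 μ) {T : ℝ} (hT : 0 < T) :
    P {ω | ∃ t : ℕ, T ≤ t ∧ empMean Y t ω ≤ z} ≤ ENNReal.ofReal (exp (-(T * klBerR z μ))) := by
  have hkl₀ : 0 ≤ klBerR z μ := klBerR_self_s14 μ ▸ ((strictAntiOn_klBerR_left hμ)
    ⟨hz.1.le, hz.2.le⟩ ⟨hμ.1.le, le_rfl⟩ hz.2).le
  obtain ⟨θ, hθ, hkl⟩ := exists_klBerR_eq_sub_log hμ hz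
  set M : ℕ → ℝ := fun i => ∫ ω, exp (θ * Y i ω) ∂P
  have hM : ∀ i, 0 < M i := fun i => integral_exp_pos (integrable_exp_mul (hmeas i) (hbdd i) θ)
  set X : ℕ → Ω → ℝ := fun i ω => exp (θ * Y i ω) / M i
  have hX_meas : ∀ i, Measurable (X i) := fun i => by fun_prop
  have hX_ind : iIndepFun X P := hindep.comp (fun i y => exp (θ * y) / M i) fun i => by fun_prop
  have hX_int : ∀ i, Integrable (X i) P :=
    fun i => (integrable_exp_mul (hmeas i) (hbdd i) θ).div_const _
  have hX_one : ∀ i, ∫ ω, X i ω ∂P = 1 := fun i => by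
    simp only [X, integral_div]
    exact div_self (hM i).ne'
  refine (measure_mono ?_).trans ((measure_exists_le_prod_le hX_meas hX_ind
    (fun i ω => by positivity) hX_int hX_one (exp_pos (T * klBerR z μ))).trans_eq
    (by rw [← exp_neg]))
  rintro ω ⟨t, hTt, hle⟩
  obtain ⟨n, rfl⟩ : ∃ n, t = n + 1 :=
    Nat.exists_eq_succ_of_ne_zero (by rintro rfl; norm_num at hTt; linarith)
  have hsum : ∑ i ∈ Finset.range (n + 1), Y i ω ≤ ((n + 1 : ℕ) : ℝ) * z := by
    rw [← mul_div_cancel₀ (∑ i ∈ Finset.range (n + 1), Y i ω)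
      (by positivity : ((n + 1 : ℕ) : ℝ) ≠ 0)]
    exact mul_le_mul_of_nonneg_left hle (by positivity)
  refine ⟨n, ?_⟩
  calc exp (T * klBerR z μ) ≤ exp ((n + 1 : ℕ) * klBerR z μ) :=
        exp_le_exp.2 (mul_le_mul_of_nonneg_right hTt hkl₀)
    _ ≤ ∏ i ∈ Finset.range (n + 1), X i ω := by
        rw [hkl]
        exact exp_mul_le_prod_exp_mul_div hθ.le
          (add_pos (sub_pos.2 hμ.2) (mul_pos hμ.1 (exp_pos θ))) hM
          (fun i => integral_exp_mul_le (hmeas i) (hbdd i) (hmean i) θ) hsum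

theorem measure_exists_klExceeds_le [IsProbabilityMeasure P] (hmeas : ∀ i, Measurable (Y i))
    (hindep : iIndepFun Y P) (hbdd : ∀ i ω, Y i ω ∈ Icc (0 : ℝ) 1) (hμ : μ ∈ Ioo 0 1)
    (hmean : ∀ i, ∫ ω, Y i ω ∂P = μ) {T d : ℝ} (hT : 0 < T) :
    P {ω | ∃ t : ℕ, T ≤ t ∧ KLExceeds Y μ d t ω} ≤ ENNReal.ofReal (exp (-(T * d))) := by
  rcases le_or_gt d 0 with hd | hd
  · exact prob_le_one.trans (ENNReal.one_le_ofReal.2 (one_le_exp (by nlinarith)))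
  rcases le_or_gt (klBerR 0 μ) d with hd₀ | hd₀
  · refine le_of_eq_of_le (measure_eq_zero_iff_ae_notMem.2 (ae_of_all _ ?_)) bot_le
    rintro ω ⟨t, -, hlt, hgt⟩
    exact lt_irrefl _ ((klBerR_le_klBerR_zero hμ ⟨empMean_nonneg hbdd t ω, hlt.le⟩).trans_lt
      (hd₀.trans_lt hgt))
  obtain ⟨z, hz, rfl⟩ := exists_klBerR_eq hμ hd hd₀
  calc P {ω | ∃ t : ℕ, T ≤ t ∧ KLExceeds Y μ (klBerR z μ) t ω}
      ≤ P {ω | ∃ t : ℕ, T ≤ t ∧ empMean Y t ω ≤ z} :=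
        measure_mono fun ω ⟨t, hTt, hlt, hgt⟩ => ⟨t, hTt, (((strictAntiOn_klBerR_left hμ).lt_iff_gt
          ⟨hz.1.le, hz.2.le⟩ ⟨empMean_nonneg hbdd t ω, hlt.le⟩).1 hgt).le⟩
    _ ≤ _ := measure_exists_empMean_le_le hmeas hindep hbdd hμ hmean hz hT

end Chernoff

lemma exists_dyadic_slice {l N : ℕ} (hN : 0 < N) {x : ℝ} (hx : 2 ^ l ≤ x) :
    ∃ k : ℕ, ∃ j < N,
      (2 : ℝ) ^ ((l + k : ℝ) + j / N) ≤ x ∧ x ≤ 2 ^ ((l + k : ℝ) + j / N + 1 / N) := by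
  have hx₀ : 0 < x := lt_of_lt_of_le (by positivity) hx
  have hNR : (0 : ℝ) < N := by exact_mod_cast hN
  have hl : (l : ℝ) ≤ logb 2 x :=
    (le_logb_iff_rpow_le one_lt_two hx₀).2 (by rwa [rpow_natCast])
  -- write `N (logb 2 x - l)` as `m + fraction` and split `m = N k + j`
  set m := ⌊N * (logb 2 x - l)⌋₊
  have hm : ((m / N : ℕ) : ℝ) + ((m % N : ℕ) : ℝ) / N = m / N := by
    rw [eq_div_iff hNR.ne', add_mul, div_mul_cancel₀ _ hNR.ne']
    exact_mod_cast Nat.div_add_mod' m N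
  have h₁ : (m : ℝ) / N ≤ logb 2 x - l := by
    rw [div_le_iff₀' hNR]; exact Nat.floor_le (by nlinarith)
  have h₂ : logb 2 x - l < (m + 1) / N := by
    rw [lt_div_iff₀' hNR]; exact Nat.lt_floor_add_one _
  refine ⟨m / N, m % N, Nat.mod_lt _ hN, ?_, ?_⟩
  · rw [← le_logb_iff_rpow_le one_lt_two hx₀]
    linarith
  · rw [← logb_le_iff_le_rpow one_lt_two hx₀]
    linarith [add_div (m : ℝ) 1 N]

lemma one_le_logb_two_mul {x : ℝ} (hx : 1 ≤ x) : 1 ≤ logb 2 (2 * x) :=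
  (le_logb_iff_rpow_le one_lt_two (by positivity)).2 (by rw [rpow_one]; linarith)

section UnionBound

variable {Ω : Type*} [MeasurableSpace Ω] {P : Measure Ω} [IsProbabilityMeasure P]
  {Y : ℕ → Ω → ℝ} {μ a c p : ℝ} {f : ℕ → ℝ}

theorem measure_exists_klExceeds_threshold_le (hmeas : ∀ i, Measurable (Y i))
    (hindep : iIndepFun Y P) (hbdd : ∀ i ω, Y i ω ∈ Icc (0 : ℝ) 1) (hμ : μ ∈ Ioo 0 1)
    (hmean : ∀ i, ∫ ω, Y i ω ∂P = μ) (hf : ∀ t : ℕ, f t = c * log (a * logb 2 (2 * t)) / t)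
    (hc : 0 ≤ c) (ha : 1 ≤ a) {T₁ T₂ L : ℝ} (hT₁ : 1 ≤ T₁) (hL : 1 ≤ L)
    (hLT : L ≤ logb 2 (2 * T₁)) (hp : p ≤ c * T₁ / T₂) :
    P {ω | ∃ t : ℕ, T₁ ≤ t ∧ t ≤ T₂ ∧ KLExceeds Y μ (f t) t ω} ≤
      ENNReal.ofReal ((a * L) ^ (-p)) := by
  have haL : 0 < a * L := mul_pos (by linarith) (by linarith)
  have hlog : 0 ≤ log (a * L) := log_nonneg (one_le_mul_of_one_le_of_one_le ha hL)
  calc P {ω | ∃ t : ℕ, T₁ ≤ t ∧ t ≤ T₂ ∧ KLExceeds Y μ (f t) t ω}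
      ≤ P {ω | ∃ t : ℕ, T₁ ≤ t ∧ KLExceeds Y μ (c * log (a * L) / T₂) t ω} := by
        refine measure_mono fun ω ⟨t, h₁, h₂, hlt, hgt⟩ => ⟨t, h₁, hlt, lt_of_le_of_lt ?_ hgt⟩
        have hlog_le : log (a * L) ≤ log (a * logb 2 (2 * t)) :=
          log_le_log haL (mul_le_mul_of_nonneg_left
            (hLT.trans (logb_le_logb_of_le one_lt_two (by linarith) (by linarith))) (by linarith))
        rw [hf]
        exact div_le_div₀ (mul_nonneg hc (hlog.trans hlog_le))
          (mul_le_mul_of_nonneg_left hlog_le hc) (by linarith) h₂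
    _ ≤ ENNReal.ofReal (exp (-(T₁ * (c * log (a * L) / T₂)))) :=
        measure_exists_klExceeds_le hmeas hindep hbdd hμ hmean (by linarith)
    _ ≤ ENNReal.ofReal ((a * L) ^ (-p)) := by
        refine ENNReal.ofReal_le_ofReal ?_
        rw [rpow_def_of_pos haL, exp_le_exp]
        have := mul_le_mul_of_nonneg_right hp hlog
        calc -(T₁ * (c * log (a * L) / T₂)) = -(c * T₁ / T₂ * log (a * L)) := by ring
          _ ≤ log (a * L) * -p := by linarith

lemma summable_nat_add_rpow_neg {p : ℝ} (hp : 1 < p) (l : ℕ) :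
    Summable fun k : ℕ => ((k : ℝ) + l + 1) ^ (-p) :=
  ((summable_nat_add_iff (l + 1)).2 (Real.summable_nat_rpow (p := -p) |>.2 (by linarith))).congr
    fun k => by push_cast; ring_nf

theorem measure_exists_lt_klExceeds_le (hmeas : ∀ i, Measurable (Y i))
    (hindep : iIndepFun Y P) (hbdd : ∀ i ω, Y i ω ∈ Icc (0 : ℝ) 1) (hμ : μ ∈ Ioo 0 1)
    (hmean : ∀ i, ∫ ω, Y i ω ∂P = μ) (hf : ∀ t : ℕ, f t = c * log (a * logb 2 (2 * t)) / t)
    (hc : 0 ≤ c) (ha : 1 ≤ a) (hpc : p ≤ c) (N : ℕ) :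
    P {ω | ∃ t : ℕ, 0 < t ∧ t < N ∧ KLExceeds Y μ (f t) t ω} ≤
      ENNReal.ofReal (a ^ (-p) * ∑ t ∈ Finset.Ico 1 N, logb 2 (2 * t) ^ (-p)) := by
  have hterm : ∀ t ∈ Finset.Ico 1 N, 0 ≤ a ^ (-p) * logb 2 (2 * t) ^ (-p) := fun t ht =>
    mul_nonneg (by positivity) (rpow_nonneg (zero_le_one.trans
      (one_le_logb_two_mul (by exact_mod_cast (Finset.mem_Ico.1 ht).1))) _)
  calc P {ω | ∃ t : ℕ, 0 < t ∧ t < N ∧ KLExceeds Y μ (f t) t ω}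
      ≤ P (⋃ t ∈ Finset.Ico 1 N,
          {ω | ∃ s : ℕ, (t : ℝ) ≤ s ∧ (s : ℝ) ≤ t ∧ KLExceeds Y μ (f s) s ω}) :=
        measure_mono fun ω ⟨t, ht, htN, hex⟩ =>
          mem_iUnion₂.2 ⟨t, Finset.mem_Ico.2 ⟨ht, htN⟩, t, le_rfl, le_rfl, hex⟩
    _ ≤ ∑ t ∈ Finset.Ico 1 N, ENNReal.ofReal (a ^ (-p) * logb 2 (2 * t) ^ (-p)) := by
        refine (measure_biUnion_finset_le _ _).trans (Finset.sum_le_sum fun t ht => ?_)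
        have ht₁ : (1 : ℝ) ≤ t := by exact_mod_cast (Finset.mem_Ico.1 ht).1
        rw [← mul_rpow (by linarith) (by linarith [one_le_logb_two_mul ht₁])]
        refine measure_exists_klExceeds_threshold_le hmeas hindep hbdd hμ hmean hf hc ha ht₁
          (one_le_logb_two_mul ht₁) le_rfl ?_
        rwa [mul_div_cancel_right₀ _ (by linarith)]
    _ = ENNReal.ofReal (a ^ (-p) * ∑ t ∈ Finset.Ico 1 N, logb 2 (2 * t) ^ (-p)) := by
        rw [Finset.mul_sum, ENNReal.ofReal_sum_of_nonneg hterm]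

/-- The times `t ≥ N` are covered by the slices
`[2 ^ (l + k + j / N), 2 ^ (l + k + (j + 1) / N)]`, `j < N`, of the dyadic scales `k`. -/
theorem measure_exists_ge_klExceeds_le (hmeas : ∀ i, Measurable (Y i))
    (hindep : iIndepFun Y P) (hbdd : ∀ i ω, Y i ω ∈ Icc (0 : ℝ) 1) (hμ : μ ∈ Ioo 0 1)
    (hmean : ∀ i, ∫ ω, Y i ω ∂P = μ) (hf : ∀ t : ℕ, f t = c * log (a * logb 2 (2 * t)) / t)
    (hc : 0 ≤ c) (ha : 1 ≤ a) {l N : ℕ} (hN : N = 2 ^ l) (hp : 1 < p)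
    (hpc : p ≤ c * 2 ^ (-(1 / N : ℝ))) :
    P {ω | ∃ t : ℕ, N ≤ t ∧ KLExceeds Y μ (f t) t ω} ≤
      ENNReal.ofReal (a ^ (-p) * (N * ∑' k : ℕ, ((k : ℝ) + l + 1) ^ (-p))) := by
  have hN₀ : 0 < N := hN ▸ Nat.two_pow_pos l
  set e : ℕ → ℕ → ℝ := fun k j => (l + k : ℝ) + j / N
  set slice : ℕ → ℕ → Set Ω := fun k j => {ω | ∃ t : ℕ, 2 ^ e k j ≤ (t : ℝ) ∧
    (t : ℝ) ≤ 2 ^ (e k j + 1 / N) ∧ KLExceeds Y μ (f t) t ω}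
  have hslice : ∀ k j, P (slice k j) ≤ ENNReal.ofReal (a ^ (-p) * ((k : ℝ) + l + 1) ^ (-p)) := by
    intro k j
    have he : 0 ≤ e k j := by positivity
    rw [← mul_rpow (by linarith) (by positivity)]
    refine measure_exists_klExceeds_threshold_le hmeas hindep hbdd hμ hmean hf hc ha
      (one_le_rpow one_le_two he) (by linarith) ?_ ?_
    · rw [← rpow_one_add' zero_le_two (by linarith), logb_rpow two_pos (by norm_num)]
      simp only [e]; linarith [div_nonneg j.cast_nonneg (N.cast_nonneg : (0 : ℝ) ≤ N)]
    · rwa [mul_div_assoc, ← rpow_sub two_pos, sub_add_cancel_left]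
  calc P {ω | ∃ t : ℕ, N ≤ t ∧ KLExceeds Y μ (f t) t ω}
      ≤ P (⋃ k, ⋃ j ∈ Finset.range N, slice k j) := measure_mono fun ω ⟨t, htN, hex⟩ => by
        obtain ⟨k, j, hj, h₁, h₂⟩ := exists_dyadic_slice hN₀ (x := t) (by exact_mod_cast hN ▸ htN)
        exact mem_iUnion.2 ⟨k, mem_iUnion₂.2 ⟨j, Finset.mem_range.2 hj, t, h₁, h₂, hex⟩⟩
    _ ≤ ∑' k : ℕ, N * ENNReal.ofReal (a ^ (-p) * ((k : ℝ) + l + 1) ^ (-p)) := by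
        refine (measure_iUnion_le _).trans (ENNReal.tsum_le_tsum fun k => ?_)
        refine (measure_biUnion_finset_le _ _).trans ?_
        simpa using Finset.sum_le_sum fun j (_ : j ∈ Finset.range N) => hslice k j
    _ = ENNReal.ofReal (a ^ (-p) * (N * ∑' k : ℕ, ((k : ℝ) + l + 1) ^ (-p))) := by
        rw [mul_left_comm, ENNReal.ofReal_mul (by positivity), ENNReal.ofReal_natCast,
          ← tsum_mul_left, ENNReal.ofReal_tsum_of_nonneg (fun k => by positivity)
            ((summable_nat_add_rpow_neg hp l).mul_left _), ENNReal.tsum_mul_left]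

theorem measure_exists_pos_klExceeds_le (hmeas : ∀ i, Measurable (Y i))
    (hindep : iIndepFun Y P) (hbdd : ∀ i ω, Y i ω ∈ Icc (0 : ℝ) 1) (hμ : μ ∈ Ioo 0 1)
    (hmean : ∀ i, ∫ ω, Y i ω ∂P = μ) (hf : ∀ t : ℕ, f t = c * log (a * logb 2 (2 * t)) / t)
    (hc : 0 ≤ c) (ha : 1 ≤ a) {l N : ℕ} (hN : N = 2 ^ l) (hp : 1 < p)
    (hpc : p ≤ c * 2 ^ (-(1 / N : ℝ))) :
    P {ω | ∃ t : ℕ, 0 < t ∧ KLExceeds Y μ (f t) t ω} ≤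
      ENNReal.ofReal (a ^ (-p) * (∑ t ∈ Finset.Ico 1 N, logb 2 (2 * t) ^ (-p) +
        N * ∑' k : ℕ, ((k : ℝ) + l + 1) ^ (-p))) := by
  have hpc' : p ≤ c := hpc.trans (mul_le_of_le_one_right hc
    (rpow_le_one_of_one_le_of_nonpos one_le_two (neg_nonpos.2 (by positivity))))
  have hsmall : 0 ≤ ∑ t ∈ Finset.Ico 1 N, logb 2 (2 * t) ^ (-p) :=
    Finset.sum_nonneg fun t ht => rpow_nonneg (zero_le_one.trans
      (one_le_logb_two_mul (by exact_mod_cast (Finset.mem_Ico.1 ht).1))) _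
  calc P {ω | ∃ t : ℕ, 0 < t ∧ KLExceeds Y μ (f t) t ω}
      ≤ P ({ω | ∃ t : ℕ, 0 < t ∧ t < N ∧ KLExceeds Y μ (f t) t ω} ∪
          {ω | ∃ t : ℕ, N ≤ t ∧ KLExceeds Y μ (f t) t ω}) :=
        measure_mono fun ω ⟨t, ht, hex⟩ =>
          (lt_or_ge t N).imp (fun htN => ⟨t, ht, htN, hex⟩) fun htN => ⟨t, htN, hex⟩
    _ ≤ _ := (measure_union_le _ _).trans (add_le_add
        (measure_exists_lt_klExceeds_le hmeas hindep hbdd hμ hmean hf hc ha hpc' N)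
        (measure_exists_ge_klExceeds_le hmeas hindep hbdd hμ hmean hf hc ha hN hp hpc))
    _ = _ := by
        rw [mul_add, ENNReal.ofReal_add (by positivity) (by positivity)]

end UnionBound

lemma le_ucb {m r u : ℝ}
    (hu : ∀ S : Set ℝ, S = {x | x ∈ Ioc m 1 ∧ klBer m x ≤ (r : EReal)} →
      (S.Nonempty → u = sSup S) ∧ (¬ S.Nonempty → u = m)) : m ≤ u := by
  obtain ⟨hne, hempty⟩ := hu _ rfl
  by_cases hS : {x | x ∈ Ioc m 1 ∧ klBer m x ≤ (r : EReal)}.Nonempty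
  · obtain ⟨x, hx⟩ := hS
    rw [hne ⟨x, hx⟩]
    exact hx.1.1.le.trans (le_csSup ⟨1, fun y hy => hy.1.2⟩ hx)
  · exact (hempty hS).ge

lemma lt_and_lt_klBerR_of_ucb_lt {m r u μ : ℝ} (hμ : μ ∈ Ioo 0 1)
    (hu : ∀ S : Set ℝ, S = {x | x ∈ Ioc m 1 ∧ klBer m x ≤ (r : EReal)} →
      (S.Nonempty → u = sSup S) ∧ (¬ S.Nonempty → u = m))
    (hlt : u < μ) : m < μ ∧ r < klBerR m μ := by
  have hm : m < μ := (le_ucb hu).trans_lt hlt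
  refine ⟨hm, lt_of_not_ge fun hr => hlt.not_ge ?_⟩
  have hμS : μ ∈ {x | x ∈ Ioc m 1 ∧ klBer m x ≤ (r : EReal)} := by
    refine ⟨⟨hm, hμ.2.le⟩, ?_⟩
    rw [klBer, if_neg (by rintro ⟨h | h, -⟩ <;> linarith [hμ.1, hμ.2])]
    exact_mod_cast hr
  rw [((hu _ rfl).1 ⟨μ, hμS⟩)]
  exact le_csSup ⟨1, fun y hy => hy.1.2⟩ hμS

lemma exists_lt_of_sSup_lt {μ γ : ℝ} {V : ℕ → ℝ → ℝ} (hγ : γ ∈ Ioo (0 : ℝ) 1)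
    (h : sSup {ε | ε ∈ Ioo (0 : ℝ) 1 ∧ ∀ t : ℕ, 0 < t → μ ≤ V t ε} < γ) :
    ∃ t : ℕ, 0 < t ∧ V t γ < μ := by
  by_contra! hcon
  exact h.not_ge (le_csSup ⟨1, fun ε hε => hε.1.2.le⟩ ⟨hγ, hcon⟩)

lemma div_le_div_sub_log_mul_two_rpow {n : ℝ} (hn : 1 ≤ n) :
    0 < n - log (n + 1) ∧ (n + 1) / n ≤ (n + 1) / (n - log (n + 1)) * 2 ^ (-(1 / n)) := by
  have hpos : 0 < n - log (n + 1) := by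
    linarith [log_lt_sub_one_of_pos (by linarith : 0 < n + 1) (by linarith : n + 1 ≠ 1)]
  refine ⟨hpos, ?_⟩
  -- `2 ^ (-1/n) = exp (-log 2 / n) ≥ 1 - log 2 / n ≥ 1 - log (n + 1) / n`
  have h₂ : (n - log (n + 1)) / n ≤ 2 ^ (-(1 / n)) := by
    have hl : log 2 / n ≤ log (n + 1) / n :=
      div_le_div_of_nonneg_right (log_le_log two_pos (by linarith)) (by linarith)
    have hexp := add_one_le_exp (log 2 * -(1 / n))
    rw [rpow_def_of_pos two_pos, sub_div, div_self (by linarith : n ≠ 0)]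
    linarith [show log 2 * -(1 / n) = -(log 2 / n) by ring]
  calc (n + 1) / n = (n + 1) / (n - log (n + 1)) * ((n - log (n + 1)) / n) := by
        field_simp
    _ ≤ _ := by gcongr

/-- The sum inside `κ(N)`, with `p = (N + 1) / N`. -/
noncomputable def dyadicWeight (l N : ℕ) (p : ℝ) : ℝ :=
  (if l ≠ 0 then ∑ t ∈ Finset.Icc 1 N, (logb 2 (2 * (t : ℝ))) ^ (-p) else 0) +
    (N : ℝ) * ∑' k : ℕ, ((k : ℝ) + (l : ℝ) + 1) ^ (-p)

lemma sum_Ico_add_le_dyadicWeight {l N : ℕ} (hN : N = 2 ^ l) (p : ℝ) :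
    ∑ t ∈ Finset.Ico 1 N, logb 2 (2 * t) ^ (-p) + N * ∑' k : ℕ, ((k : ℝ) + l + 1) ^ (-p) ≤
      dyadicWeight l N p := by
  rw [dyadicWeight]
  split_ifs with hl
  · gcongr
    · exact fun t ht _ => rpow_nonneg (zero_le_one.trans
        (one_le_logb_two_mul (by exact_mod_cast (Finset.mem_Icc.1 ht).1))) _
    · exact Finset.Ico_subset_Icc_self
  · simp [hN, not_not.1 hl]

lemma one_le_dyadicWeight {l N : ℕ} (hN : N = 2 ^ l) {p : ℝ} (hp : 1 < p) :
    1 ≤ dyadicWeight l N p := by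
  have htsum : 0 ≤ ∑' k : ℕ, ((k : ℝ) + l + 1) ^ (-p) := tsum_nonneg fun k => by positivity
  rw [dyadicWeight]
  split_ifs with hl
  · have h₁ : 1 ≤ ∑ t ∈ Finset.Icc 1 N, logb 2 (2 * (t : ℝ)) ^ (-p) := by
      refine le_of_eq_of_le (by norm_num) (Finset.single_le_sum (f := fun t : ℕ =>
        logb 2 (2 * (t : ℝ)) ^ (-p)) (fun t ht => rpow_nonneg (zero_le_one.trans
          (one_le_logb_two_mul (by exact_mod_cast (Finset.mem_Icc.1 ht).1))) _)
        (Finset.mem_Icc.2 ⟨le_rfl, hN ▸ Nat.one_le_two_pow⟩))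
    nlinarith [N.cast_nonneg (α := ℝ)]
  · obtain rfl := not_not.1 hl
    have h₁ : 1 ≤ ∑' k : ℕ, ((k : ℝ) + (0 : ℕ) + 1) ^ (-p) :=
      le_of_eq_of_le (by simp) ((summable_nat_add_rpow_neg hp 0).le_tsum 0
        fun k _ => by positivity)
    simpa [hN] using h₁

lemma rpow_mul_rpow_div_eq_div_rpow {γ A n : ℝ} (hγ : 0 < γ) (hA : 0 ≤ A) (hn : 0 < n) :
    γ ^ (1 / (n + 1)) * A ^ (n / (n + 1)) / γ = (A / γ) ^ (n / (n + 1)) := by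
  have hsplit : γ = γ ^ (1 / (n + 1)) * γ ^ (n / (n + 1)) := by
    rw [← rpow_add hγ, ← add_div, add_comm, div_self (by linarith), rpow_one]
  rw [div_rpow hA hγ.le]
  nth_rewrite 2 [hsplit]
  field_simp

lemma div_rpow_rpow_neg_mul_eq {γ A n : ℝ} (hγ : 0 < γ) (hA : 0 < A) (hn : 0 < n) :
    ((A / γ) ^ (n / (n + 1))) ^ (-((n + 1) / n)) * A = γ := by
  rw [← rpow_mul (by positivity), show n / (n + 1) * -((n + 1) / n) = -1 by field_simp,
    rpow_neg_one, inv_div, div_mul_cancel₀ _ hA.ne']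

section LogTail

variable {Ω : Type*} [MeasurableSpace Ω] {P : Measure Ω} [IsProbabilityMeasure P] {Δ : Ω → ℝ}

lemma measure_le_le_of_forall_measure_lt_le
    (h : ∀ γ ∈ Ioo (0 : ℝ) 1, P {ω | Δ ω < γ} ≤ ENNReal.ofReal γ) {e : ℝ} (he : 0 < e) :
    P {ω | Δ ω ≤ e} ≤ ENNReal.ofReal e := by
  refine le_of_forall_gt_imp_ge_of_dense fun b hb => ?_
  rcases le_or_gt 1 b with hb₁ | hb₁
  · exact prob_le_one.trans hb₁
  have hb_top : b ≠ ⊤ := (hb₁.trans ENNReal.one_lt_top).ne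
  have heb : e < b.toReal := (ENNReal.ofReal_lt_iff_lt_toReal he.le hb_top).1 hb
  have hb₁' : b.toReal < 1 := by
    simpa using (ENNReal.toReal_lt_toReal hb_top ENNReal.one_ne_top).2 hb₁
  calc P {ω | Δ ω ≤ e} ≤ P {ω | Δ ω < b.toReal} := measure_mono fun ω hω => lt_of_le_of_lt hω heb
    _ ≤ ENNReal.ofReal b.toReal := h _ ⟨he.trans heb, hb₁'⟩
    _ = b := ENNReal.ofReal_toReal hb_top

theorem measure_log_inv_div_ge_le
    (h : ∀ γ ∈ Ioo (0 : ℝ) 1, P {ω | Δ ω < γ} ≤ ENNReal.ofReal γ) {D z : ℝ} (hz : 0 ≤ z) :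
    P {ω | log (1 / Δ ω) / D ≥ z} ≤ ENNReal.ofReal (exp (-D * z)) := by
  rcases le_or_gt (D * z) 0 with hDz | hDz
  · exact prob_le_one.trans (ENNReal.one_le_ofReal.2 (one_le_exp (by linarith)))
  have hD : 0 < D := pos_of_mul_pos_left hDz hz
  refine (measure_mono fun ω (hω : z ≤ log (1 / Δ ω) / D) => ?_).trans
    (measure_le_le_of_forall_measure_lt_le h (exp_pos _))
  have hlog : D * z ≤ log (1 / Δ ω) := by rwa [le_div_iff₀ hD, mul_comm] at hω
  show Δ ω ≤ exp (-D * z)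
  rcases le_or_gt (Δ ω) 0 with hΔ | hΔ
  · exact hΔ.trans (exp_pos _).le
  · rw [one_div, log_inv] at hlog
    calc Δ ω = exp (log (Δ ω)) := (exp_log hΔ).symm
      _ ≤ exp (-D * z) := exp_le_exp.2 (by linarith)

end LogTail

theorem lil_klucb_random_confidence_level_general
    {Ω : Type*} [MeasurableSpace Ω] (P : Measure Ω) [IsProbabilityMeasure P]
    (Y : ℕ → Ω → ℝ) (hmeas : ∀ i, Measurable (Y i))
    (hindep : iIndepFun Y P)
    (hbdd : ∀ i ω, Y i ω ∈ Set.Icc (0:ℝ) 1)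
    (μ : ℝ) (hμ : μ ∈ Set.Ioo (0:ℝ) 1)
    (hmean : ∀ i, ∫ ω, Y i ω ∂P = μ)
    (l N : ℕ) (hN : N = 2 ^ l)
    (κ : ℝ → ℝ)
    (hκ : ∀ ε : ℝ, κ ε = ε ^ ((1:ℝ)/((N:ℝ)+1)) *
      ((if l ≠ 0 then
          ∑ t ∈ Finset.Icc 1 N, (Real.logb 2 (2*(t:ℝ))) ^ (-(((N:ℝ)+1)/(N:ℝ)))
        else 0)
        + (N:ℝ) * ∑' k : ℕ, ((k:ℝ) + (l:ℝ) + 1) ^ (-(((N:ℝ)+1)/(N:ℝ))))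
        ^ ((N:ℝ)/((N:ℝ)+1)))
    (c : ℝ) (hc : c = ((N:ℝ)+1)/((N:ℝ) - Real.log ((N:ℝ)+1)))
    (f : ℕ → ℝ → ℝ)
    (hf : ∀ t : ℕ, ∀ ε : ℝ,
      f t ε = c * Real.log (κ ε * Real.logb 2 (2*(t:ℝ)) / ε) / (t:ℝ))
    (emp : ℕ → Ω → ℝ)
    (hemp : ∀ t ω, emp t ω = (∑ j ∈ Finset.range t, Y j ω) / (t:ℝ))
    (U : ℕ → ℝ → Ω → ℝ)
    (hU : ∀ t : ℕ, ∀ ε : ℝ, ∀ ω, ∀ S : Set ℝ,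
      S = {m : ℝ | m ∈ Set.Ioc (emp t ω) 1 ∧ klBer (emp t ω) m ≤ ((f t ε : ℝ) : EReal)} →
      (S.Nonempty → U t ε ω = sSup S) ∧ (¬ S.Nonempty → U t ε ω = emp t ω))
    (Δ : Ω → ℝ)
    (hΔ : ∀ ω, Δ ω = sSup {ε : ℝ | ε ∈ Set.Ioo (0:ℝ) 1 ∧ ∀ t : ℕ, 0 < t → μ ≤ U t ε ω}) :
    (∀ γ : ℝ, γ ∈ Set.Ioo (0:ℝ) 1 → P {ω | Δ ω < γ} ≤ ENNReal.ofReal γ) ∧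
    (∀ μt : ℝ, μt ∈ Set.Ioo μ 1 → ∀ zz : ℝ, 0 ≤ zz →
      P {ω | Real.log (1 / Δ ω) / chernoffR μ μt ≥ zz} ≤
        ENNReal.ofReal (Real.exp (-(chernoffR μ μt) * zz))) := by
  obtain rfl : emp = empMean Y := funext₂ hemp
  subst hc
  have hN₀ : (0 : ℝ) < N := by rw [hN]; positivity
  set p : ℝ := ((N : ℝ) + 1) / N
  have hp : 1 < p := by rw [lt_div_iff₀ hN₀]; linarith
  obtain ⟨hc₀, hpc⟩ := div_le_div_sub_log_mul_two_rpow (n := (N : ℝ)) (by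
    rw [hN]; exact_mod_cast Nat.one_le_two_pow)
  have hA := one_le_dyadicWeight hN hp
  have hdev : ∀ γ ∈ Ioo (0 : ℝ) 1, P {ω | Δ ω < γ} ≤ ENNReal.ofReal γ := by
    intro γ hγ
    have ha_eq : κ γ / γ = (dyadicWeight l N p / γ) ^ ((N : ℝ) / (N + 1)) := by
      rw [hκ γ]; exact rpow_mul_rpow_div_eq_div_rpow hγ.1 (zero_le_one.trans hA) hN₀
    have ha : 1 ≤ κ γ / γ :=
      ha_eq ▸ one_le_rpow ((one_le_div hγ.1).2 (by linarith [hγ.2])) (by positivity)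
    calc P {ω | Δ ω < γ} ≤ P {ω | ∃ t : ℕ, 0 < t ∧ KLExceeds Y μ (f t γ) t ω} :=
          measure_mono fun ω (hω : Δ ω < γ) => by
            obtain ⟨t, ht, hlt⟩ := exists_lt_of_sSup_lt hγ (hΔ ω ▸ hω)
            exact ⟨t, ht, lt_and_lt_klBerR_of_ucb_lt hμ (hU t γ ω) hlt⟩
      _ ≤ _ := measure_exists_pos_klExceeds_le hmeas hindep hbdd hμ hmean
          (fun t => by rw [hf, mul_div_right_comm (κ γ)]) (by positivity) ha hN hp hpc
      _ ≤ ENNReal.ofReal ((κ γ / γ) ^ (-p) * dyadicWeight l N p) := ENNReal.ofReal_le_ofReal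
          (mul_le_mul_of_nonneg_left (sum_Ico_add_le_dyadicWeight hN p) (by positivity))
      _ = ENNReal.ofReal γ := by
          rw [ha_eq, div_rpow_rpow_neg_mul_eq hγ.1 (by linarith) hN₀]
  exact ⟨hdev, fun _ _ _ hz => measure_log_inv_div_ge_le hdev hz⟩

/-- The random confidence level `Δ = sup{ε ∈ (0,1) : U_t(ε) ≥ μ ∀t}` (with
`sup ∅ = 0`, which is Mathlib's convention for `sSup (∅ : Set ℝ)`) satisfies
`P(Δ < γ) ≤ γ`, and consequently `log(1/Δ)/D*(μ,μ̃)` has a sub-exponential tail. -/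
theorem lil_klucb_random_confidence_level
    {Ω : Type*} [MeasurableSpace Ω] (P : Measure Ω) [IsProbabilityMeasure P]
    (Y : ℕ → Ω → ℝ) (hmeas : ∀ i, Measurable (Y i))
    (hindep : iIndepFun Y P)
    (hident : ∀ i, IdentDistrib (Y i) (Y 0) P P)
    (hbdd : ∀ i ω, Y i ω ∈ Set.Icc (0:ℝ) 1)
    (μ : ℝ) (hμ : μ ∈ Set.Ioo (0:ℝ) 1)
    (hmean : ∀ i, ∫ ω, Y i ω ∂P = μ)
    (l N : ℕ) (hN : N = 2 ^ l)
    (κ : ℝ → ℝ)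
    (hκ : ∀ ε : ℝ, κ ε = ε ^ ((1:ℝ)/((N:ℝ)+1)) *
      ((if l ≠ 0 then
          ∑ t ∈ Finset.Icc 1 N, (Real.logb 2 (2*(t:ℝ))) ^ (-(((N:ℝ)+1)/(N:ℝ)))
        else 0)
        + (N:ℝ) * ∑' k : ℕ, ((k:ℝ) + (l:ℝ) + 1) ^ (-(((N:ℝ)+1)/(N:ℝ))))
        ^ ((N:ℝ)/((N:ℝ)+1)))
    (c : ℝ) (hc : c = ((N:ℝ)+1)/((N:ℝ) - Real.log ((N:ℝ)+1)))
    (f : ℕ → ℝ → ℝ)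
    (hf : ∀ t : ℕ, ∀ ε : ℝ,
      f t ε = c * Real.log (κ ε * Real.logb 2 (2*(t:ℝ)) / ε) / (t:ℝ))
    (emp : ℕ → Ω → ℝ)
    (hemp : ∀ t ω, emp t ω = (∑ j ∈ Finset.range t, Y j ω) / (t:ℝ))
    (U : ℕ → ℝ → Ω → ℝ)
    (hU : ∀ t : ℕ, ∀ ε : ℝ, ∀ ω, ∀ S : Set ℝ,
      S = {m : ℝ | m ∈ Set.Ioc (emp t ω) 1 ∧ klBer (emp t ω) m ≤ ((f t ε : ℝ) : EReal)} →
      (S.Nonempty → U t ε ω = sSup S) ∧ (¬ S.Nonempty → U t ε ω = emp t ω))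
    (Δ : Ω → ℝ)
    (hΔ : ∀ ω, Δ ω = sSup {ε : ℝ | ε ∈ Set.Ioo (0:ℝ) 1 ∧ ∀ t : ℕ, 0 < t → μ ≤ U t ε ω}) :
    (∀ γ : ℝ, γ ∈ Set.Ioo (0:ℝ) 1 → P {ω | Δ ω < γ} ≤ ENNReal.ofReal γ) ∧
    (∀ μt : ℝ, μt ∈ Set.Ioo μ 1 → ∀ zz : ℝ, 0 ≤ zz →
      P {ω | Real.log (1 / Δ ω) / chernoffR μ μt ≥ zz} ≤
        ENNReal.ofReal (Real.exp (-(chernoffR μ μt) * zz))) :=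
  lil_klucb_random_confidence_level_general P Y hmeas hindep hbdd μ hμ hmean l N hN κ hκ c hc f hf
    emp hemp U hU Δ hΔ
end
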